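/- arXiv:2511.14389 — 9 statements merged into one kernel-verified Lean document; each statement's English description precedes it below -/
import Mathlib

section
/- Let A be a real symmetric positive semidefinite n×n matrix, q ∈ ℝ^n, and f(x) = xᵀAx + qᵀx. Let a₁,…,a_m, c₁,…,c_l ∈ ℝ^n and b₁,…,b_m, w₁,…,w_l ∈ ℝ, and let S = { x ∈ ℝ^n : aᵢᵀx + bᵢ ≥ 0 for i = 1,…,m, and cⱼᵀx + wⱼ = 0 for j = 1,…,l }. Suppose x⋆ ∈ S attains the minimum f⋆ of f over S. Then there exist η ∈ ℝ^m with ηᵢ ≥ 0 for all i and γ ∈ ℝ^l such that for every x ∈ ℝ^n: f(x) − f⋆ = (x − x⋆)ᵀA(x − x⋆) + Σᵢ ηᵢ(aᵢᵀx + bᵢ) + Σⱼ γⱼ(cⱼᵀx + wⱼ). (This identity shows that the order-1 sum-of-squares relaxation of the convex quadratic program is exact.) -/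
/-!
At the minimiser `x⋆` the second-order Taylor expansion of `f` is exact:
`f x - f⋆ = (x - x⋆)ᵀ A (x - x⋆) + ∇f(x⋆)ᵀ (x - x⋆)`. Minimality along the feasible directions
`d` (those with `aᵢᵀd ≥ 0` for the active inequalities and `cⱼᵀd = 0`) gives `∇f(x⋆)ᵀd ≥ 0`, so by
Farkas' lemma `∇f(x⋆)` is a nonnegative combination of the active `aᵢ` plus a combination of the
`cⱼ` (the KKT conditions). Since the multipliers of the inactive constraints vanish and `x⋆` is
feasible, `∇f(x⋆)ᵀ (x - x⋆)` equals `Σᵢ ηᵢ (aᵢᵀx + bᵢ) + Σⱼ γⱼ (cⱼᵀx + wⱼ)`.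
-/

open Matrix Filter Topology

theorem Finset.sum_insert_update_smul {ι R M : Type*} [DecidableEq ι] [Semiring R]
    [AddCommMonoid M] [Module R M] {s : Finset ι} {i : ι} (hi : i ∉ s) (η : ι → R) (μ : R)
    (v : ι → M) :
    ∑ j ∈ insert i s, Function.update η i μ j • v j = μ • v i + ∑ j ∈ s, η j • v j := by
  rw [sum_insert hi, Function.update_self]
  congr 1
  exact sum_congr rfl fun j hj => by rw [Function.update_of_ne (ne_of_mem_of_not_mem hj hi)]

section Farkas

variable {𝕜 E ι κ : Type*} [Field 𝕜] [LinearOrder 𝕜] [IsStrictOrderedRing 𝕜]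
  [AddCommGroup E] [Module 𝕜 E]

/-- Farkas' lemma, proved by Fourier–Motzkin elimination of one functional at a time. -/
theorem Module.Dual.exists_nonneg_eq_sum_smul_of_nonneg (s : Finset ι)
    (v : ι → Module.Dual 𝕜 E) (g : Module.Dual 𝕜 E)
    (h : ∀ x, (∀ i ∈ s, 0 ≤ v i x) → 0 ≤ g x) :
    ∃ η : ι → 𝕜, (∀ i, 0 ≤ η i) ∧ g = ∑ i ∈ s, η i • v i := by
  classical
  induction s using Finset.induction_on generalizing g v with
  | empty =>
    refine ⟨0, fun _ => le_rfl, LinearMap.ext fun x => ?_⟩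
    have h₁ := h x (by simp)
    have h₂ := h (-x) (by simp)
    simp only [map_neg, Left.nonneg_neg_iff] at h₂
    simpa using le_antisymm h₂ h₁
  | insert i s hi ih =>
    by_cases hs : ∀ x, (∀ j ∈ s, 0 ≤ v j x) → 0 ≤ g x
    · obtain ⟨η, hη, rfl⟩ := ih v g hs
      exact ⟨Function.update η i 0, le_update_iff.2 ⟨le_rfl, fun j _ => hη j⟩,
        by rw [Finset.sum_insert_update_smul hi, zero_smul, zero_add]⟩
    push Not at hs
    obtain ⟨x₀, hx₀, hgx₀⟩ := hs
    have hα : v i x₀ < 0 := by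
      by_contra! hα
      exact hgx₀.not_ge (h x₀ (Finset.forall_mem_insert _ _ _ |>.2 ⟨hα, hx₀⟩))
    -- Eliminate `v i`: project every functional along `x₀` onto the kernel of `v i`.
    set P : Module.Dual 𝕜 E → Module.Dual 𝕜 E := fun φ => φ - (φ x₀ / v i x₀) • v i
    have hP_apply (φ : Module.Dual 𝕜 E) (x : E) :
        P φ x = φ (x - (v i x / v i x₀) • x₀) := by
      simp only [P, LinearMap.sub_apply, LinearMap.smul_apply, map_sub, map_smul, smul_eq_mul]
      ring
    have hvi (x : E) : v i (x - (v i x / v i x₀) • x₀) = 0 := by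
      rw [map_sub, map_smul, smul_eq_mul, div_mul_cancel₀ _ hα.ne, sub_self]
    obtain ⟨η, hη, hPg⟩ := ih (P ∘ v) (P g) fun x hx => by
      simp only [Function.comp_apply, hP_apply] at hx ⊢
      exact h _ (Finset.forall_mem_insert _ _ _ |>.2 ⟨(hvi x).ge, hx⟩)
    set μ := g x₀ / v i x₀ - ∑ j ∈ s, η j * (v j x₀ / v i x₀)
    have hμ : 0 ≤ μ := by
      rw [sub_nonneg]
      refine (Finset.sum_nonpos fun k hk => ?_).trans (div_nonneg_of_nonpos hgx₀.le hα.le)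
      exact mul_nonpos_of_nonneg_of_nonpos (hη k)
        (div_nonpos_of_nonneg_of_nonpos (hx₀ k hk) hα.le)
    refine ⟨Function.update η i μ, le_update_iff.2 ⟨hμ, fun j _ => hη j⟩, ?_⟩
    have hg : g = P g + (g x₀ / v i x₀) • v i := by simp [P]
    rw [Finset.sum_insert_update_smul hi, hg, hPg]
    simp only [Function.comp_apply, P, smul_sub, Finset.sum_sub_distrib, smul_smul,
      ← Finset.sum_smul, μ]
    module

theorem Module.Dual.exists_nonneg_eq_sum_smul_add_sum_smul_of_nonneg [Fintype κ] (s : Finset ι)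
    (v : ι → Module.Dual 𝕜 E) (u : κ → Module.Dual 𝕜 E) (g : Module.Dual 𝕜 E)
    (h : ∀ x, (∀ i ∈ s, 0 ≤ v i x) → (∀ j, u j x = 0) → 0 ≤ g x) :
    ∃ (η : ι → 𝕜) (γ : κ → 𝕜), (∀ i, 0 ≤ η i) ∧ g = ∑ i ∈ s, η i • v i + ∑ j, γ j • u j := by
  obtain ⟨η, hη, hg⟩ := exists_nonneg_eq_sum_smul_of_nonneg (s.disjSum Finset.univ)
    (Sum.elim v (Sum.elim u (-u))) g fun x hx => h x (fun i hi => hx (.inl i) (by simpa))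
      fun j => le_antisymm (by simpa using hx (.inr (.inr j)) (by simp))
        (by simpa using hx (.inr (.inl j)) (by simp))
  refine ⟨η ∘ .inl, fun j => η (.inr (.inl j)) - η (.inr (.inr j)), fun i => hη _, ?_⟩
  rw [hg, Finset.sum_disjSum, Fintype.sum_sum_type]
  simp only [Sum.elim_inl, Sum.elim_inr, Pi.neg_apply, smul_neg, Function.comp_apply,
    Finset.sum_neg_distrib, ← sub_eq_add_neg, ← Finset.sum_sub_distrib]
  exact congrArg _ (Finset.sum_congr rfl fun j _ => (sub_smul _ _ _).symm)

end Farkas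

theorem Matrix.IsSymm.quadratic_taylor {R n : Type*} [CommRing R] [Fintype n]
    {A : Matrix n n R} (hA : A.IsSymm) (q x y : n → R) :
    (x ⬝ᵥ A *ᵥ x + q ⬝ᵥ x) - (y ⬝ᵥ A *ᵥ y + q ⬝ᵥ y)
      = (x - y) ⬝ᵥ A *ᵥ (x - y) + ((2 • A) *ᵥ y + q) ⬝ᵥ (x - y) := by
  have hxy : x ⬝ᵥ A *ᵥ y = y ⬝ᵥ A *ᵥ x := by rw [← dotProduct_transpose_mulVec, hA.eq]
  simp only [two_smul, add_mulVec, mulVec_sub, dotProduct_sub, sub_dotProduct, add_dotProduct,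
    dotProduct_comm (A *ᵥ y), hxy]
  ring

theorem eventually_nonneg_dotProduct_add_smul_add {n ι : Type*} [Fintype n] [Finite ι]
    (a : ι → n → ℝ) (b : ι → ℝ) {x d : n → ℝ} (hx : ∀ i, 0 ≤ a i ⬝ᵥ x + b i)
    (hd : ∀ i, a i ⬝ᵥ x + b i = 0 → 0 ≤ a i ⬝ᵥ d) :
    ∀ᶠ t in 𝓝[>] (0 : ℝ), ∀ i, 0 ≤ a i ⬝ᵥ (x + t • d) + b i := by
  refine eventually_all.2 fun i => ?_
  have hlin (t : ℝ) : a i ⬝ᵥ (x + t • d) + b i = a i ⬝ᵥ x + b i + t * (a i ⬝ᵥ d) := by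
    rw [dotProduct_add, dotProduct_smul, smul_eq_mul]; ring
  simp only [hlin]
  rcases (hx i).eq_or_lt with hact | hslack
  · filter_upwards [self_mem_nhdsWithin] with t ht
    rw [← hact, zero_add]
    exact mul_nonneg (le_of_lt ht) (hd i hact.symm)
  · have hcont : Continuous fun t : ℝ => a i ⬝ᵥ x + b i + t * (a i ⬝ᵥ d) := by fun_prop
    have := (hcont.tendsto' 0 _ (by simp)).eventually (eventually_gt_nhds hslack)
    exact (this.filter_mono nhdsWithin_le_nhds).mono fun _ => le_of_lt

theorem nonneg_of_eventually_nonneg_sq_mul_add_mul {Q L : ℝ}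
    (h : ∀ᶠ t in 𝓝[>] 0, 0 ≤ t ^ 2 * Q + t * L) : 0 ≤ L := by
  have hlim : Tendsto (fun t : ℝ => t * Q + L) (𝓝[>] 0) (𝓝 L) := by
    refine (Continuous.tendsto' ?_ 0 _ (by simp)).mono_left nhdsWithin_le_nhds
    fun_prop
  refine ge_of_tendsto hlim ?_
  filter_upwards [h, self_mem_nhdsWithin] with t ht htpos
  refine nonneg_of_mul_nonneg_right ?_ htpos
  linarith

section QuadraticProgram

variable {n ι κ : Type*} [Fintype n] [Fintype ι] {A : Matrix n n ℝ} {q : n → ℝ}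
  {a : ι → n → ℝ} {b : ι → ℝ} {c : κ → n → ℝ} {w : κ → ℝ} {xstar : n → ℝ}

theorem gradient_dotProduct_nonneg_of_minimizer (hA : A.IsSymm)
    (hineq : ∀ i, 0 ≤ a i ⬝ᵥ xstar + b i) (heq : ∀ j, c j ⬝ᵥ xstar + w j = 0)
    (hopt : ∀ x : n → ℝ, (∀ i, 0 ≤ a i ⬝ᵥ x + b i) → (∀ j, c j ⬝ᵥ x + w j = 0) →
      xstar ⬝ᵥ A *ᵥ xstar + q ⬝ᵥ xstar ≤ x ⬝ᵥ A *ᵥ x + q ⬝ᵥ x)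
    {d : n → ℝ} (hd : ∀ i, a i ⬝ᵥ xstar + b i = 0 → 0 ≤ a i ⬝ᵥ d) (hdc : ∀ j, c j ⬝ᵥ d = 0) :
    0 ≤ ((2 • A) *ᵥ xstar + q) ⬝ᵥ d := by
  refine nonneg_of_eventually_nonneg_sq_mul_add_mul (Q := d ⬝ᵥ A *ᵥ d) ?_
  filter_upwards [eventually_nonneg_dotProduct_add_smul_add a b hineq hd] with t ht
  have hteq (j : κ) : c j ⬝ᵥ (xstar + t • d) + w j = 0 := by
    rw [dotProduct_add, dotProduct_smul, hdc, smul_zero, add_zero, heq]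
  have := sub_nonneg.2 (hopt _ ht hteq)
  rw [hA.quadratic_taylor, add_sub_cancel_left] at this
  simpa [mulVec_smul, smul_dotProduct, dotProduct_smul, pow_two, mul_assoc] using this

theorem exists_kkt_multipliers [Fintype κ] (hA : A.IsSymm)
    (hineq : ∀ i, 0 ≤ a i ⬝ᵥ xstar + b i) (heq : ∀ j, c j ⬝ᵥ xstar + w j = 0)
    (hopt : ∀ x : n → ℝ, (∀ i, 0 ≤ a i ⬝ᵥ x + b i) → (∀ j, c j ⬝ᵥ x + w j = 0) →
      xstar ⬝ᵥ A *ᵥ xstar + q ⬝ᵥ xstar ≤ x ⬝ᵥ A *ᵥ x + q ⬝ᵥ x) :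
    ∃ (η : ι → ℝ) (γ : κ → ℝ), (∀ i, 0 ≤ η i) ∧ (∀ i, η i * (a i ⬝ᵥ xstar + b i) = 0) ∧
      ∀ d, ((2 • A) *ᵥ xstar + q) ⬝ᵥ d = ∑ i, η i * (a i ⬝ᵥ d) + ∑ j, γ j * (c j ⬝ᵥ d) := by
  classical
  obtain ⟨η, γ, hη, hg⟩ := Module.Dual.exists_nonneg_eq_sum_smul_add_sum_smul_of_nonneg
    {i | a i ⬝ᵥ xstar + b i = 0} (fun i => dotProductBilin ℝ ℝ (a i))
    (fun j => dotProductBilin ℝ ℝ (c j)) (dotProductBilin ℝ ℝ ((2 • A) *ᵥ xstar + q))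
    fun d hd hdc => by
      simpa using gradient_dotProduct_nonneg_of_minimizer hA hineq heq hopt
        (by simpa using hd) (by simpa using hdc)
  refine ⟨fun i => if a i ⬝ᵥ xstar + b i = 0 then η i else 0, γ,
    fun i => ?_, fun i => ?_, fun d => ?_⟩
  · dsimp only
    split_ifs <;> simp [hη]
  · dsimp only
    split_ifs with h <;> simp [h]
  · simpa [Finset.sum_filter, ite_mul, DFunLike.ite_apply] using LinearMap.congr_fun hg d

end QuadraticProgram

/-- Exactness of the order-1 SOS relaxation for convex quadratic programs:
if `x⋆` minimizes `f(x) = xᵀAx + qᵀx` (with `A ⪰ 0`) over the polyhedron given by the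
affine inequalities `aᵢᵀx + bᵢ ≥ 0` and equalities `cⱼᵀx + wⱼ = 0`, then there exist
multipliers `η ≥ 0` and `γ` such that
`f(x) − f⋆ = (x−x⋆)ᵀA(x−x⋆) + Σᵢ ηᵢ(aᵢᵀx+bᵢ) + Σⱼ γⱼ(cⱼᵀx+wⱼ)` for all `x`. -/
theorem stmt4 (n m l : ℕ)
    (A : Matrix (Fin n) (Fin n) ℝ) (hA : A.PosSemidef) (q : Fin n → ℝ)
    (a : Fin m → Fin n → ℝ) (b : Fin m → ℝ)
    (c : Fin l → Fin n → ℝ) (w : Fin l → ℝ)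
    (xstar : Fin n → ℝ)
    (hineq : ∀ i, 0 ≤ a i ⬝ᵥ xstar + b i) (heq : ∀ j, c j ⬝ᵥ xstar + w j = 0)
    (hopt : ∀ x : Fin n → ℝ, (∀ i, 0 ≤ a i ⬝ᵥ x + b i) → (∀ j, c j ⬝ᵥ x + w j = 0) →
      xstar ⬝ᵥ A.mulVec xstar + q ⬝ᵥ xstar ≤ x ⬝ᵥ A.mulVec x + q ⬝ᵥ x) :
    ∃ (η : Fin m → ℝ) (γ : Fin l → ℝ), (∀ i, 0 ≤ η i) ∧
      ∀ x : Fin n → ℝ,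
        (x ⬝ᵥ A.mulVec x + q ⬝ᵥ x) - (xstar ⬝ᵥ A.mulVec xstar + q ⬝ᵥ xstar)
          = (x - xstar) ⬝ᵥ A.mulVec (x - xstar)
            + ∑ i, η i * (a i ⬝ᵥ x + b i) + ∑ j, γ j * (c j ⬝ᵥ x + w j) := by
  have hsymm : A.IsSymm := isHermitian_iff_isSymm.1 hA.isHermitian
  obtain ⟨η, γ, hη, hslack, hgrad⟩ := exists_kkt_multipliers hsymm hineq heq hopt
  refine ⟨η, γ, hη, fun x => ?_⟩
  rw [hsymm.quadratic_taylor, hgrad, add_assoc]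
  congr 2
  · refine Finset.sum_congr rfl fun i _ => ?_
    rw [dotProduct_sub]
    linear_combination -hslack i
  · refine Finset.sum_congr rfl fun j _ => ?_
    rw [dotProduct_sub]
    linear_combination -γ j * heq j
end

section
/- Let μ be a positive measure on ℝ^n whose monomial moments up to degree 2k are finite, let f be a real polynomial in n variables of degree at most 2k, let λ̲, λ ∈ ℝ with λ̲ ≤ λ, and let G be a positive semidefinite real symmetric matrix indexed by ℕ^n_k such that f(x) − λ = v_k(x)ᵀ G v_k(x) for all x ∈ ℝ^n, where v_k(x) = (x^α)_{α∈ℕ^n_k}. If λ_min(M_k(μ)) > 0 and ∫(f − λ̲) dμ ≤ λ_min(M_k(μ)), then tr(G) ≤ 1. -/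
open Matrix BigOperators MeasureTheory

/-- The set `ℕ^n_k` of multi-indices `α ∈ ℕ^n` with `|α| = α₁ + ⋯ + αₙ ≤ k`. -/
abbrev MIdx (n k : ℕ) : Type := {α : Fin n → ℕ // ∑ i, α i ≤ k}

noncomputable instance (n k : ℕ) : Fintype (MIdx n k) :=
  Fintype.ofInjective
    (fun a : MIdx n k => fun i : Fin n =>
      (⟨a.1 i, Nat.lt_succ_of_le
        ((Finset.single_le_sum (fun j _ => Nat.zero_le (a.1 j)) (Finset.mem_univ i)).trans
          a.2)⟩ : Fin (k + 1)))
    (fun a b h => Subtype.ext (funext fun i => congrArg Fin.val (congrFun h i)))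

/-- The smallest eigenvalue of a real symmetric matrix, expressed as the infimum of the
Rayleigh quotient over the unit sphere (Courant–Fischer). -/
noncomputable def eigMin {m : Type} [Fintype m] (A : Matrix m m ℝ) : ℝ :=
  ⨅ v : {v : m → ℝ // v ⬝ᵥ v = 1}, v.1 ⬝ᵥ A.mulVec v.1

/-- The moment matrix `M_k(μ)` of a measure `μ` on `ℝ^n`: the matrix indexed by `ℕ^n_k`
with `(α,β)` entry `∫ x^{α+β} dμ`. -/
noncomputable def momentMatrix (n k : ℕ) (μ : Measure (Fin n → ℝ)) :
    Matrix (MIdx n k) (MIdx n k) ℝ :=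
  Matrix.of fun α β => ∫ x, ∏ i, x i ^ (α.1 i + β.1 i) ∂μ

/-! Writing `v(x)` for the vector of monomials of degree `≤ k`, integrating the certificate
`f - λ = v(x)ᵀ G v(x)` against `μ` gives `∫ (f - λ) dμ = tr(G M)` with `M = M_k(μ)`.
Since `M - λ_min(M) I` and `G` are positive semidefinite, `tr(G M) ≥ λ_min(M) tr(G)`, so
`λ_min(M) tr(G) ≤ ∫ (f - λ) dμ ≤ ∫ (f - λ̲) dμ ≤ λ_min(M)`, and `λ_min(M) > 0` gives
`tr(G) ≤ 1`. -/

namespace Matrix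

variable {m : Type*} [Fintype m]

theorem PosSemidef.trace_mul_nonneg [DecidableEq m] {A B : Matrix m m ℝ}
    (hA : A.PosSemidef) (hB : B.PosSemidef) : 0 ≤ (A * B).trace := by
  open scoped MatrixOrder in
  set S := CFC.sqrt A
  have hS : Sᴴ = S := (CFC.sqrt_nonneg A).posSemidef.isHermitian
  have hSS : S * S = A := CFC.sqrt_mul_sqrt_self A hA.nonneg
  have := (hB.mul_mul_conjTranspose_same S).trace_nonneg
  rwa [hS, trace_mul_cycle, hSS] at this

theorem trace_mul_eq_sum_sum {n R : Type*} [Fintype n] [AddCommMonoid R] [Mul R]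
    (A : Matrix m n R) (B : Matrix n m R) :
    (A * B).trace = ∑ i, ∑ j, A i j * B j i := by
  simp only [trace, diag, mul_apply]

end Matrix

section eigMin

variable {m : Type} [Fintype m]

theorem isCompact_dotProduct_self_eq_one : IsCompact {v : m → ℝ | v ⬝ᵥ v = 1} := by
  refine Metric.isCompact_of_isClosed_isBounded
    (isClosed_eq (by fun_prop) continuous_const) ?_
  refine (Metric.isBounded_closedBall (x := 0) (r := 1)).subset fun v hv => ?_
  rw [mem_closedBall_zero_iff, pi_norm_le_iff_of_nonneg zero_le_one]
  intro i
  rw [Real.norm_eq_abs, abs_le_one_iff_mul_self_le_one, ← (Set.mem_ofPred.mp hv)]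
  exact Finset.single_le_sum (fun j _ => mul_self_nonneg (v j)) (Finset.mem_univ i)

theorem eigMin_le_dotProduct_mulVec (A : Matrix m m ℝ) {v : m → ℝ} (hv : v ⬝ᵥ v = 1) :
    eigMin A ≤ v ⬝ᵥ A *ᵥ v := by
  have hbdd := isCompact_dotProduct_self_eq_one.bddBelow_image
    (f := fun v => v ⬝ᵥ A *ᵥ v) (by fun_prop)
  rw [Set.image_eq_range] at hbdd
  exact ciInf_le hbdd ⟨v, hv⟩

theorem eigMin_mul_dotProduct_self_le (A : Matrix m m ℝ) (v : m → ℝ) :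
    eigMin A * (v ⬝ᵥ v) ≤ v ⬝ᵥ A *ᵥ v := by
  rcases eq_or_ne v 0 with rfl | hv
  · simp
  have hpos : 0 < v ⬝ᵥ v := by simpa using dotProduct_star_self_pos_iff.mpr hv
  set s := Real.sqrt (v ⬝ᵥ v)
  have hs : s * s = v ⬝ᵥ v := Real.mul_self_sqrt hpos.le
  have hunit : (s⁻¹ • v) ⬝ᵥ (s⁻¹ • v) = 1 := by
    rw [smul_dotProduct, dotProduct_smul, smul_smul, smul_eq_mul, ← mul_inv, hs,
      inv_mul_cancel₀ hpos.ne']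
  have h := eigMin_le_dotProduct_mulVec A hunit
  rw [mulVec_smul, smul_dotProduct, dotProduct_smul, smul_smul, smul_eq_mul, ← mul_inv, hs,
    ← div_eq_inv_mul, le_div_iff₀ hpos] at h
  exact h

theorem Matrix.IsHermitian.posSemidef_sub_eigMin_smul_one [DecidableEq m] {A : Matrix m m ℝ}
    (hA : A.IsHermitian) : (A - eigMin A • (1 : Matrix m m ℝ)).PosSemidef := by
  refine .of_dotProduct_mulVec_nonneg (hA.sub (isHermitian_one.smul (.all _))) fun v => ?_
  have := eigMin_mul_dotProduct_self_le A v
  simp only [star_trivial, sub_mulVec, smul_mulVec, one_mulVec, dotProduct_sub,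
    dotProduct_smul, smul_eq_mul]
  linarith

theorem eigMin_mul_trace_le_trace_mul [DecidableEq m] {A G : Matrix m m ℝ}
    (hA : A.IsHermitian) (hG : G.PosSemidef) : eigMin A * G.trace ≤ (G * A).trace := by
  have := hG.trace_mul_nonneg hA.posSemidef_sub_eigMin_smul_one
  rw [Matrix.mul_sub, trace_sub, Matrix.mul_smul, Matrix.mul_one, trace_smul, smul_eq_mul] at this
  linarith

end eigMin

theorem integral_dotProduct_mulVec {X ι : Type*} [MeasurableSpace X] [Fintype ι]
    {μ : Measure X} (φ : ι → X → ℝ) (hφ : ∀ a b, Integrable (fun x => φ a x * φ b x) μ)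
    (G : Matrix ι ι ℝ) :
    ∫ x, (fun a => φ a x) ⬝ᵥ G *ᵥ (fun a => φ a x) ∂μ
      = (G * of fun a b => ∫ x, φ a x * φ b x ∂μ).trace := by
  have hexpand : ∀ x, (fun a => φ a x) ⬝ᵥ G *ᵥ (fun a => φ a x)
      = ∑ a, ∑ b, G a b * (φ b x * φ a x) := fun x => by
    simp only [dotProduct, mulVec, Finset.mul_sum]
    exact Finset.sum_congr rfl fun a _ => Finset.sum_congr rfl fun b _ => by ring
  simp only [hexpand, trace_mul_eq_sum_sum, of_apply]
  refine (integral_finsetSum _ fun a _ =>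
    integrable_finsetSum _ fun b _ => (hφ b a).const_mul _).trans
    (Finset.sum_congr rfl fun a _ => ?_)
  refine (integral_finsetSum _ fun b _ => (hφ b a).const_mul _).trans
    (Finset.sum_congr rfl fun b _ => ?_)
  exact integral_const_mul _ _

section moments

variable {n k : ℕ} {μ : Measure (Fin n → ℝ)}

theorem momentMatrix_isHermitian : (momentMatrix n k μ).IsHermitian := by
  ext α β
  simp only [conjTranspose_apply, star_trivial, momentMatrix, of_apply, add_comm]

theorem momentMatrix_eq_integral_monomial_mul :
    momentMatrix n k μ
      = of fun α β => ∫ x, (∏ i, x i ^ α.1 i) * ∏ i, x i ^ β.1 i ∂μ := by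
  ext α β
  simp only [momentMatrix, of_apply, ← Finset.prod_mul_distrib, pow_add]

end moments

/-- If `f − λ = v_kᵀ G v_k` with `G ⪰ 0`, `λ̲ ≤ λ`,
`λ_min(M_k(μ)) > 0` and `∫ (f − λ̲) dμ ≤ λ_min(M_k(μ))`, then `tr(G) ≤ 1`. -/
theorem stmt8 (n k : ℕ) (μ : Measure (Fin n → ℝ))
    (hmom : ∀ γ : Fin n → ℕ, (∑ i, γ i) ≤ 2 * k →
      Integrable (fun x => ∏ i, x i ^ γ i) μ)
    (f : MIdx n (2 * k) → ℝ) (lamL lam : ℝ) (hll : lamL ≤ lam)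
    (G : Matrix (MIdx n k) (MIdx n k) ℝ) (hG : G.PosSemidef)
    (hrep : ∀ x : Fin n → ℝ,
      (∑ γ : MIdx n (2 * k), f γ * ∏ i, x i ^ γ.1 i) - lam
        = (fun α : MIdx n k => ∏ i, x i ^ α.1 i) ⬝ᵥ
            G.mulVec (fun α : MIdx n k => ∏ i, x i ^ α.1 i))
    (hpos : 0 < eigMin (momentMatrix n k μ))
    (hint : (∫ x, ((∑ γ : MIdx n (2 * k), f γ * ∏ i, x i ^ γ.1 i) - lamL) ∂μ)
      ≤ eigMin (momentMatrix n k μ)) :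
    G.trace ≤ 1 := by
  classical
  set P : (Fin n → ℝ) → ℝ := fun x => ∑ γ : MIdx n (2 * k), f γ * ∏ i, x i ^ γ.1 i
  have : IsFiniteMeasure μ := by
    have h1 := hmom 0 (by simp)
    simp only [Pi.zero_apply, pow_zero, Finset.prod_const_one] at h1
    simpa using integrable_const_iff.mp h1
  have hP : Integrable P μ :=
    integrable_finsetSum _ fun γ _ => (hmom γ.1 γ.2).const_mul (f γ)
  have hpair (α β : MIdx n k) :
      Integrable (fun x => (∏ i, x i ^ α.1 i) * ∏ i, x i ^ β.1 i) μ := by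
    simp only [← Finset.prod_mul_distrib, ← pow_add]
    refine hmom _ ?_
    rw [Finset.sum_add_distrib, two_mul]
    exact add_le_add α.2 β.2
  have htrace : (G * momentMatrix n k μ).trace = ∫ x, (P x - lam) ∂μ := by
    rw [momentMatrix_eq_integral_monomial_mul, ← integral_dotProduct_mulVec _ hpair]
    exact integral_congr_ae (.of_forall fun x => (hrep x).symm)
  have hchain : eigMin (momentMatrix n k μ) * G.trace ≤ eigMin (momentMatrix n k μ) * 1 :=
    calc _ ≤ (G * momentMatrix n k μ).trace :=
          eigMin_mul_trace_le_trace_mul momentMatrix_isHermitian hG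
      _ = ∫ x, (P x - lam) ∂μ := htrace
      _ ≤ ∫ x, (P x - lamL) ∂μ :=
          integral_mono (hP.sub (integrable_const _)) (hP.sub (integrable_const _))
            fun x => sub_le_sub_left hll _
      _ ≤ _ := by rwa [mul_one]
  exact le_of_mul_le_mul_left hchain hpos
end

section
/- Let n, k, m ∈ ℕ, let g₀ = 1 (with d₀ = 0), and let g₁,…,g_m be real polynomials in n variables with gᵢ = Σ_{ζ∈ℕ^n_{2dᵢ}} g_{i,ζ} x^ζ, dᵢ ≤ k, and Σ_{ζ} |g_{i,ζ}| ≤ 1 for each i = 0,…,m. For γ ∈ ℕ^n_{2k}, let B_g^{(γ)} be the block-diagonal real symmetric matrix whose i-th diagonal block (indexed by ℕ^n_{k−dᵢ}) is Σ_{ζ∈ℕ^n_{2dᵢ}, γ−ζ∈ℕ^n} g_{i,ζ} · Bᵢ^{(γ−ζ)}, where Bᵢ^{(η)} is the real symmetric matrix indexed by ℕ^n_{k−dᵢ} with (α,β) entry 1 if α + β = η and 0 otherwise. Then −I ⪯ B_g^{(γ)} ⪯ I, where I is the identity matrix of the same size as B_g^{(γ)}. -/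
open Matrix BigOperators

/-- The block-diagonal coefficient-matching matrix `B_g^{(γ)}`: its `i`-th diagonal block,
indexed by `ℕ^n_{k−dᵢ}`, is `Σ_{ζ∈ℕ^n_{2dᵢ}, γ−ζ∈ℕ^n} g_{i,ζ} Bᵢ^{(γ−ζ)}`; that is, the
entry at `((i,α),(i,β))` is `Σ_{ζ : α+β+ζ = γ} g_{i,ζ}`, and off-block entries vanish. -/
noncomputable def BgMat (n k m : ℕ) (d : Fin (m + 1) → ℕ)
    (gc : Fin (m + 1) → (Fin n → ℕ) → ℝ) (γ : Fin n → ℕ) :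
    Matrix ((i : Fin (m + 1)) × MIdx n (k - d i))
      ((i : Fin (m + 1)) × MIdx n (k - d i)) ℝ :=
  Matrix.of fun p q =>
    if p.1 = q.1 then
      ∑ ζ : MIdx n (2 * d p.1),
        if (fun j => p.2.1 j + q.2.1 j + ζ.1 j) = γ then gc p.1 ζ.1 else 0
    else 0

/-!
`B_g^{(γ)}` is block diagonal with `i`-th block `Σ_ζ g_{i,ζ} B^{(γ−ζ)}`. Each `B^{(η)}` is a
symmetric 0/1 matrix with at most one nonzero entry in every row and column, so by
`2|x_α x_β| ≤ x_α² + x_β²` its quadratic form satisfies `|xᵀ B^{(η)} x| ≤ xᵀx`. The ℓ¹ bound on the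
coefficients of `gᵢ` carries this over to every block, hence to `B_g^{(γ)}`, and for a symmetric
matrix `|xᵀ B x| ≤ xᵀx` is exactly `−I ⪯ B ⪯ I`.
-/

open Finset

theorem sum_ite_le_of_subsingleton {ι : Type*} [Fintype ι] {P : ι → Prop} [DecidablePred P]
    (hP : ∀ a b, P a → P b → a = b) {c : ℝ} (hc : 0 ≤ c) :
    ∑ a, (if P a then c else 0) ≤ c := by
  rw [sum_ite, sum_const_zero, add_zero, sum_const, nsmul_eq_mul]
  have hcard : #{a | P a} ≤ 1 := card_le_one.mpr fun a ha b hb => by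
    simp only [mem_filter, mem_univ, true_and] at ha hb
    exact hP a b ha hb
  exact mul_le_of_le_one_left hc (by exact_mod_cast hcard)

theorem abs_dotProduct_indicator_mulVec_le {ι : Type*} [Fintype ι] (R : ι → ι → Prop)
    [DecidableRel R] (hrow : ∀ a b b', R a b → R a b' → b = b')
    (hcol : ∀ a a' b, R a b → R a' b → a = a') (x : ι → ℝ) :
    |x ⬝ᵥ (of fun a b => if R a b then (1 : ℝ) else 0) *ᵥ x| ≤ x ⬝ᵥ x := by
  have hform : x ⬝ᵥ (of fun a b => if R a b then (1 : ℝ) else 0) *ᵥ x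
      = ∑ a, ∑ b, if R a b then x a * x b else 0 := by
    simp [dotProduct, mulVec, mul_sum, mul_ite]
  have hrow_sum : ∑ a, ∑ b, (if R a b then x a ^ 2 else 0) ≤ x ⬝ᵥ x :=
    sum_le_sum fun a _ => (sum_ite_le_of_subsingleton (hrow a) (sq_nonneg _)).trans_eq (sq _)
  have hcol_sum : ∑ a, ∑ b, (if R a b then x b ^ 2 else 0) ≤ x ⬝ᵥ x := by
    rw [sum_comm]
    exact sum_le_sum fun b _ =>
      (sum_ite_le_of_subsingleton (fun a a' => hcol a a' b) (sq_nonneg _)).trans_eq (sq _)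
  calc |x ⬝ᵥ (of fun a b => if R a b then (1 : ℝ) else 0) *ᵥ x|
      ≤ ∑ a, ∑ b, |if R a b then x a * x b else 0| := by
        rw [hform]
        exact (abs_sum_le_sum_abs _ _).trans (sum_le_sum fun a _ => abs_sum_le_sum_abs _ _)
    _ ≤ ∑ a, ∑ b, ((if R a b then x a ^ 2 else 0) + (if R a b then x b ^ 2 else 0)) / 2 := by
        gcongr with a _ b _
        split_ifs
        · rw [abs_mul]
          nlinarith [sq_nonneg (|x a| - |x b|), sq_abs (x a), sq_abs (x b)]
        · simp
    _ = ((∑ a, ∑ b, if R a b then x a ^ 2 else 0) +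
          ∑ a, ∑ b, if R a b then x b ^ 2 else 0) / 2 := by
        simp only [← sum_div, ← sum_add_distrib]
    _ ≤ x ⬝ᵥ x := by linarith

theorem abs_dotProduct_sum_smul_mulVec_le {ι κ : Type*} [Fintype ι] [Fintype κ] (c : κ → ℝ)
    (A : κ → Matrix ι ι ℝ) (hc : ∑ z, |c z| ≤ 1) (hA : ∀ z x, |x ⬝ᵥ A z *ᵥ x| ≤ x ⬝ᵥ x)
    (x : ι → ℝ) : |x ⬝ᵥ (∑ z, c z • A z) *ᵥ x| ≤ x ⬝ᵥ x := by
  rw [sum_mulVec, dotProduct_sum]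
  simp only [smul_mulVec, dotProduct_smul, smul_eq_mul]
  have hxx : 0 ≤ x ⬝ᵥ x := by simpa using dotProduct_self_star_nonneg x
  calc |∑ z, c z * (x ⬝ᵥ A z *ᵥ x)| ≤ ∑ z, |c z| * (x ⬝ᵥ x) := by
        refine (abs_sum_le_sum_abs _ _).trans (sum_le_sum fun z _ => ?_)
        rw [abs_mul]
        exact mul_le_mul_of_nonneg_left (hA z x) (abs_nonneg _)
    _ = (∑ z, |c z|) * (x ⬝ᵥ x) := (sum_mul _ _ _).symm
    _ ≤ x ⬝ᵥ x := mul_le_of_le_one_left hxx hc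

section BlockDiagonal

variable {o R : Type*} {p : o → Type*} [Fintype o] [∀ i, Fintype (p i)]

theorem blockDiagonal'_mulVec_apply [DecidableEq o] [NonUnitalNonAssocSemiring R]
    (A : ∀ i, Matrix (p i) (p i) R) (x : (Σ i, p i) → R) (i : o) (a : p i) :
    (blockDiagonal' A *ᵥ x) ⟨i, a⟩ = (A i *ᵥ fun b => x ⟨i, b⟩) a := by
  simp only [mulVec, dotProduct, ← univ_sigma_univ, sum_sigma]
  rw [sum_eq_single i]
  · simp
  · intro j _ hij
    exact sum_eq_zero fun b _ => by rw [blockDiagonal'_apply_ne A a b (Ne.symm hij), zero_mul]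
  · simp

theorem dotProduct_sigma [NonUnitalNonAssocSemiring R] (x y : (Σ i, p i) → R) :
    x ⬝ᵥ y = ∑ i, (fun a => x ⟨i, a⟩) ⬝ᵥ fun a => y ⟨i, a⟩ := by
  simp only [dotProduct, ← univ_sigma_univ, sum_sigma]

theorem abs_dotProduct_blockDiagonal'_mulVec_le [DecidableEq o] (A : ∀ i, Matrix (p i) (p i) ℝ)
    (hA : ∀ i x, |x ⬝ᵥ A i *ᵥ x| ≤ x ⬝ᵥ x) (x : (Σ i, p i) → ℝ) :
    |x ⬝ᵥ blockDiagonal' A *ᵥ x| ≤ x ⬝ᵥ x := by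
  rw [dotProduct_sigma x, dotProduct_sigma x]
  simp only [blockDiagonal'_mulVec_apply]
  exact (abs_sum_le_sum_abs _ _).trans (sum_le_sum fun i _ => hA i _)

end BlockDiagonal

theorem posSemidef_one_sub_and_add_one_of_abs_le {ι : Type*} [Fintype ι] [DecidableEq ι]
    {A : Matrix ι ι ℝ} (hA : A.IsHermitian) (hbound : ∀ x, |x ⬝ᵥ A *ᵥ x| ≤ x ⬝ᵥ x) :
    (1 - A).PosSemidef ∧ (A + 1).PosSemidef := by
  simp only [posSemidef_iff_dotProduct_mulVec, star_trivial, sub_mulVec, add_mulVec, one_mulVec,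
    dotProduct_sub, dotProduct_add]
  exact ⟨⟨isHermitian_one.sub hA, fun x => by linarith [(abs_le.mp (hbound x)).2]⟩,
    ⟨hA.add isHermitian_one, fun x => by linarith [(abs_le.mp (hbound x)).1]⟩⟩

/-- The matrix `B^{(γ−ζ)}` of the paper, written without truncated subtraction: its `(α, β)`
entry is `1` iff `α + β + ζ = γ`. -/
noncomputable def hankelBasis (n K : ℕ) (ζ γ : Fin n → ℕ) : Matrix (MIdx n K) (MIdx n K) ℝ :=
  of fun α β => if (fun j => α.1 j + β.1 j + ζ j) = γ then 1 else 0

theorem hankelBasis_isHermitian (n K : ℕ) (ζ γ : Fin n → ℕ) :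
    (hankelBasis n K ζ γ).IsHermitian := by
  refine IsHermitian.ext fun α β => ?_
  simp only [hankelBasis, of_apply, star_trivial, add_comm (α.1 _)]

theorem abs_dotProduct_hankelBasis_mulVec_le (n K : ℕ) (ζ γ : Fin n → ℕ) (x : MIdx n K → ℝ) :
    |x ⬝ᵥ hankelBasis n K ζ γ *ᵥ x| ≤ x ⬝ᵥ x :=
  abs_dotProduct_indicator_mulVec_le _
    (fun _ _ _ h h' => Subtype.ext <| funext fun j => by
      have := congrFun h j; have := congrFun h' j; omega)
    (fun _ _ _ h h' => Subtype.ext <| funext fun j => by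
      have := congrFun h j; have := congrFun h' j; omega) x

theorem BgMat_eq_blockDiagonal' (n k m : ℕ) (d : Fin (m + 1) → ℕ)
    (gc : Fin (m + 1) → (Fin n → ℕ) → ℝ) (γ : Fin n → ℕ) :
    BgMat n k m d gc γ =
      blockDiagonal' fun i => ∑ ζ : MIdx n (2 * d i), gc i ζ.1 • hankelBasis n (k - d i) ζ.1 γ := by
  ext ⟨i, α⟩ ⟨j, β⟩
  by_cases hij : i = j
  · subst hij
    simp [BgMat, hankelBasis, Matrix.sum_apply]
  · rw [blockDiagonal'_apply_ne _ _ _ hij]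
    simp [BgMat, hij]

theorem stmt9_general (n k m : ℕ) (d : Fin (m + 1) → ℕ)
    (gc : Fin (m + 1) → (Fin n → ℕ) → ℝ)
    (hl1 : ∀ i : Fin (m + 1), ∑ ζ : MIdx n (2 * d i), |gc i ζ.1| ≤ 1)
    (γ : Fin n → ℕ) :
    (1 - BgMat n k m d gc γ).PosSemidef ∧ (BgMat n k m d gc γ + 1).PosSemidef := by
  rw [BgMat_eq_blockDiagonal']
  refine posSemidef_one_sub_and_add_one_of_abs_le ?_ ?_
  · exact isHermitian_blockDiagonal'_iff.mpr fun i =>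
      isSelfAdjoint_sum _ fun _ _ => (hankelBasis_isHermitian _ _ _ _).smul (.all _)
  · exact abs_dotProduct_blockDiagonal'_mulVec_le _ fun i =>
      abs_dotProduct_sum_smul_mulVec_le _ _ (hl1 i) fun _ =>
        abs_dotProduct_hankelBasis_mulVec_le _ _ _ _

/-- If `g₀ = 1`, each `gᵢ` has degree at most `2dᵢ ≤ 2k` and
`Σ_ζ |g_{i,ζ}| ≤ 1`, then `−I ⪯ B_g^{(γ)} ⪯ I` for every `γ ∈ ℕ^n_{2k}`. -/
theorem stmt9 (n k m : ℕ) (d : Fin (m + 1) → ℕ) (hd0 : d 0 = 0) (hdk : ∀ i, d i ≤ k)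
    (gc : Fin (m + 1) → (Fin n → ℕ) → ℝ)
    (hg0 : gc 0 = fun ζ => if ζ = 0 then 1 else 0)
    (hsupp : ∀ (i : Fin (m + 1)) (ζ : Fin n → ℕ), ¬ (∑ j, ζ j ≤ 2 * d i) → gc i ζ = 0)
    (hl1 : ∀ i : Fin (m + 1), ∑ ζ : MIdx n (2 * d i), |gc i ζ.1| ≤ 1)
    (γ : Fin n → ℕ) (hγ : ∑ j, γ j ≤ 2 * k) :
    (1 - BgMat n k m d gc γ).PosSemidef ∧ (BgMat n k m d gc γ + 1).PosSemidef :=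
  stmt9_general n k m d gc hl1 γ
end

section
/- Let n, k ∈ ℕ with k ≥ 1, let R > 0, and let y = (y_γ)_{γ∈ℕ^n_{2k}} be a real sequence such that the localizing matrix M_{k−1}((R − ‖x‖₂²)·y) is positive semidefinite, where ‖x‖₂² = x₁² + ⋯ + xₙ². Then for every j = 1,…,k the Riesz functional satisfies L_y(R^j − ‖x‖₂^{2j}) ≥ 0; explicitly, R^j · y₀ − Σ_{γ∈ℕ^n, |γ|=j} (j!/(γ₁!⋯γₙ!)) · y_{2γ} ≥ 0. -/
/-!
Since `R^j - ‖x‖^{2j} = Σ_{t<j} R^t ‖x‖^{2(j-1-t)} (R - ‖x‖²)` and `R > 0`, it suffices that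
`L_y(‖x‖^{2s}(R - ‖x‖²)) ≥ 0` for `s ≤ k - 1`. By the multinomial theorem `‖x‖^{2s}` is a
nonnegative combination of the squares `(x^γ)²` with `|γ| = s`, and `L_y((x^γ)²(R - ‖x‖²))` is
the diagonal entry of the localizing matrix at `γ`, which is nonnegative.
-/

open Matrix BigOperators

/-- The localizing matrix `M_{k−1}((R − ‖x‖₂²)·y)`, indexed by `ℕ^n_{k−1}`, with
`(α,β)` entry `R·y_{α+β} − Σᵢ y_{α+β+2eᵢ}`. -/
noncomputable def locBall (n k : ℕ) (R : ℝ) (y : (Fin n → ℕ) → ℝ) :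
    Matrix (MIdx n (k - 1)) (MIdx n (k - 1)) ℝ :=
  Matrix.of fun α β =>
    R * y (fun j => α.1 j + β.1 j)
      - ∑ i : Fin n, y (fun j => α.1 j + β.1 j + if j = i then 2 else 0)

open MvPolynomial

noncomputable def rieszFunctional {n : ℕ} (y : (Fin n → ℕ) → ℝ) :
    MvPolynomial (Fin n) ℝ →ₗ[ℝ] ℝ :=
  Finsupp.linearCombination ℝ (fun d : Fin n →₀ ℕ => y d) ∘ₗ
    (AddMonoidAlgebra.coeffLinearEquiv ℝ).toLinearMap

section Riesz

variable {n : ℕ} (y : (Fin n → ℕ) → ℝ)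

lemma rieszFunctional_monomial (d : Fin n →₀ ℕ) (c : ℝ) :
    rieszFunctional y (monomial d c) = c * y d := by
  rw [← single_eq_monomial]
  exact (Finsupp.linearCombination_single ℝ c d).trans (smul_eq_mul c (y d))

lemma rieszFunctional_C (c : ℝ) : rieszFunctional y (C c) = c * y 0 :=
  rieszFunctional_monomial y 0 c

lemma prod_X_pow_eq_monomial_equivFunOnFinite (g : Fin n → ℕ) :
    ∏ i, (X i : MvPolynomial (Fin n) ℝ) ^ g i
      = monomial (Finsupp.equivFunOnFinite.symm g) 1 := by
  rw [← prod_X_pow_eq_monomial, ← Finsupp.prod, Finsupp.prod_fintype _ _ fun _ => pow_zero _]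
  rfl

lemma sum_X_sq_pow (s : ℕ) :
    (∑ i, X i ^ 2 : MvPolynomial (Fin n) ℝ) ^ s
      = ∑ g ∈ Finset.univ.piAntidiag s,
          C (Nat.multinomial Finset.univ g : ℝ)
            * monomial (Finsupp.equivFunOnFinite.symm fun i => 2 * g i) 1 := by
  rw [Finset.sum_pow_eq_sum_piAntidiag]
  refine Finset.sum_congr rfl fun g _ => ?_
  simp_rw [← prod_X_pow_eq_monomial_equivFunOnFinite, pow_mul, ← map_natCast C]

lemma rieszFunctional_monomial_mul_ball (R : ℝ) (g : Fin n → ℕ) :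
    rieszFunctional y (monomial (Finsupp.equivFunOnFinite.symm g) 1 * (C R - ∑ i, X i ^ 2))
      = R * y g - ∑ i, y (fun j => g j + if j = i then 2 else 0) := by
  simp only [mul_sub, Finset.mul_sum, mul_comm _ (C R), C_mul_monomial, X_pow_eq_monomial,
    monomial_mul, map_sub, map_sum, rieszFunctional_monomial, one_mul, mul_one]
  refine congrArg₂ _ rfl (Finset.sum_congr rfl fun i _ => congrArg y (funext fun j => ?_))
  simp [Finsupp.single_apply, eq_comm]

lemma rieszFunctional_sum_X_sq_pow {k j : ℕ} (hjk : j ≤ k) :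
    rieszFunctional y ((∑ i, X i ^ 2) ^ j)
      = ∑ γ ∈ Finset.univ.filter (fun γ : MIdx n k => ∑ i, γ.1 i = j),
          (Nat.multinomial Finset.univ γ.1 : ℝ) * y (fun i => 2 * γ.1 i) := by
  simp only [sum_X_sq_pow, map_sum, C_mul', map_smul, rieszFunctional_monomial, smul_eq_mul,
    one_mul]
  symm
  refine Finset.sum_bij' (fun γ _ => γ.1)
    (fun g hg => ⟨g, (Finset.mem_piAntidiag.1 hg).1.le.trans hjk⟩) ?_ ?_
    (fun _ _ => rfl) (fun _ _ => rfl) (fun _ _ => rfl)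
  · intro γ hγ; simpa [Finset.mem_piAntidiag] using hγ
  · intro g hg; simpa [Finset.mem_piAntidiag] using hg

end Riesz

lemma rieszFunctional_sum_X_sq_pow_mul_ball_nonneg {n k : ℕ} {R : ℝ} {y : (Fin n → ℕ) → ℝ}
    (hdiag : ∀ α, 0 ≤ locBall n k R y α α) {s : ℕ} (hs : s ≤ k - 1) :
    0 ≤ rieszFunctional y ((∑ i, X i ^ 2) ^ s * (C R - ∑ i, X i ^ 2)) := by
  rw [sum_X_sq_pow, Finset.sum_mul, map_sum]
  refine Finset.sum_nonneg fun g hg => ?_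
  have hgk : ∑ i, g i ≤ k - 1 := (Finset.mem_piAntidiag.1 hg).1.trans_le hs
  rw [mul_assoc, C_mul', map_smul, smul_eq_mul, rieszFunctional_monomial_mul_ball]
  refine mul_nonneg (Nat.cast_nonneg _) ?_
  simpa [locBall, two_mul] using hdiag ⟨g, hgk⟩

theorem stmt11_general (n k : ℕ) (R : ℝ) (hR : 0 < R)
    (y : (Fin n → ℕ) → ℝ) (hloc : (locBall n k R y).PosSemidef) :
    ∀ j : ℕ, 1 ≤ j → j ≤ k →
      0 ≤ R ^ j * y 0
        - ∑ γ ∈ Finset.univ.filter (fun γ : MIdx n k => ∑ i, γ.1 i = j),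
            (Nat.multinomial Finset.univ γ.1 : ℝ) * y (fun i => 2 * γ.1 i) := by
  intro j _ hjk
  rw [← rieszFunctional_sum_X_sq_pow y hjk, ← rieszFunctional_C, ← map_sub, map_pow,
    ← geom_sum₂_mul, Finset.sum_mul, map_sum]
  refine Finset.sum_nonneg fun t ht => ?_
  rw [mul_assoc, ← map_pow, C_mul', map_smul, smul_eq_mul]
  exact mul_nonneg (pow_nonneg hR.le t) <|
    rieszFunctional_sum_X_sq_pow_mul_ball_nonneg (fun _ => hloc.diag_nonneg) <| by
      rw [Finset.mem_range] at ht; omega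

/-- If `M_{k−1}((R − ‖x‖₂²)·y) ⪰ 0`, then for every `j = 1,…,k`,
`L_y(R^j − ‖x‖₂^{2j}) ≥ 0`, i.e.
`R^j·y₀ − Σ_{|γ|=j} (j!/(γ₁!⋯γₙ!))·y_{2γ} ≥ 0`. -/
theorem stmt11 (n k : ℕ) (hk : 1 ≤ k) (R : ℝ) (hR : 0 < R)
    (y : (Fin n → ℕ) → ℝ) (hloc : (locBall n k R y).PosSemidef) :
    ∀ j : ℕ, 1 ≤ j → j ≤ k →
      0 ≤ R ^ j * y 0
        - ∑ γ ∈ Finset.univ.filter (fun γ : MIdx n k => ∑ i, γ.1 i = j),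
            (Nat.multinomial Finset.univ γ.1 : ℝ) * y (fun i => 2 * γ.1 i) :=
  stmt11_general n k R hR y hloc
end

section
/- Let n, k ∈ ℕ with k ≥ 1, let R ∈ (0,1), and let y = (y_γ)_{γ∈ℕ^n_{2k}} be a real sequence with y₀ = 1 such that the moment matrix M_k(y) is positive semidefinite and the localizing matrix M_{k−1}((R − ‖x‖₂²)·y) is positive semidefinite, where ‖x‖₂² = x₁² + ⋯ + xₙ². Then tr(M_k(y)) ≤ 1/(1 − R), and moreover Σ_{γ∈ℕ^n_{2k}} |y_γ| ≤ √L / (1 − R), where L = (1/2)·binom(n+k, n)·(binom(n+k, n) + 1). -/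
/-!
The diagonal of the localizing matrix gives `∑ᵢ y_{2α+2eᵢ} ≤ R · y_{2α}` for `|α| ≤ k - 1`.
Every nonzero `β` with `|β| ≤ k` is of the form `α + eᵢ`, and the diagonal entries `y_{2β}`
of `M_k(y)` are nonnegative, so summing over `α` gives `tr M_k(y) - y₀ ≤ R · tr M_k(y)`.

For the second bound, every `γ` with `|γ| ≤ 2k` splits as `α + β` with `|α|, |β| ≤ k`, so the
`y_γ` are entries of `M_k(y)` at distinct unordered pairs `{α, β}`, of which there are `L`.
Cauchy–Schwarz and `M_{αβ}² ≤ M_{αα} M_{ββ}` then give `(∑ |y_γ|)² ≤ L · (tr M_k(y))²`.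
-/

open Matrix BigOperators

/-- The moment matrix `M_k(y)`, indexed by `ℕ^n_k`, with `(α,β)` entry `y_{α+β}`. -/
noncomputable def momMatY (n k : ℕ) (y : (Fin n → ℕ) → ℝ) :
    Matrix (MIdx n k) (MIdx n k) ℝ :=
  Matrix.of fun α β => y (fun j => α.1 j + β.1 j)

open Finset

namespace Matrix.PosSemidef

variable {ι : Type*} {M : Matrix ι ι ℝ}

theorem apply_sq_le (hM : M.PosSemidef) (i j : ι) : M i j ^ 2 ≤ M i i * M j j := by
  classical
  have hdet := (hM.submatrix ![i, j]).det_nonneg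
  have hsymm : M j i = M i j := by simpa using hM.isHermitian.apply i j
  rw [det_fin_two] at hdet
  simp only [submatrix_apply, Matrix.cons_val_zero, Matrix.cons_val_one, hsymm] at hdet
  nlinarith

theorem sum_sq_le_trace_sq [Fintype ι] (hM : M.PosSemidef) :
    ∑ i, ∑ j, M i j ^ 2 ≤ M.trace ^ 2 := by
  rw [trace, sq, sum_mul_sum]
  exact sum_le_sum fun i _ => sum_le_sum fun j _ => hM.apply_sq_le i j

end Matrix.PosSemidef

theorem Pi.exists_le_sum_eq {ι : Type*} [Fintype ι] (γ : ι → ℕ) :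
    ∀ m ≤ ∑ i, γ i, ∃ β ≤ γ, ∑ i, β i = m := by
  classical
  intro m
  induction m with
  | zero => exact fun _ => ⟨0, zero_le, by simp⟩
  | succ m ih =>
    intro hm
    obtain ⟨β, hβγ, rfl⟩ := ih (by omega)
    obtain ⟨i, hi⟩ : ∃ i, β i < γ i := by
      by_contra! h
      have := sum_le_sum fun i (_ : i ∈ univ) => h i
      omega
    refine ⟨β + Pi.single i 1, fun j => ?_, by simp [sum_add_distrib]⟩
    rcases eq_or_ne j i with rfl | hj
    · simpa using hi
    · simpa [hj] using hβγ j

namespace MIdx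

variable {n k : ℕ}

def equivSumEq (n k : ℕ) : MIdx n k ≃ {P : Fin (n + 1) → ℕ // ∑ i, P i = k} where
  toFun α := ⟨Fin.cons (k - ∑ i, α.1 i) α.1, by
    rw [Fin.sum_univ_succ]
    simp only [Fin.cons_zero, Fin.cons_succ]
    exact Nat.sub_add_cancel α.2⟩
  invFun P := ⟨Fin.tail P.1, by
    have hP := P.2
    rw [Fin.sum_univ_succ] at hP
    simp only [Fin.tail]
    omega⟩
  left_inv α := rfl
  right_inv P := by
    obtain ⟨P, hP⟩ := P
    rw [Fin.sum_univ_succ] at hP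
    ext i
    refine Fin.cases ?_ (fun _ => rfl) i
    simp only [Fin.cons_zero, Fin.tail]
    omega

theorem card_eq_choose (n k : ℕ) : Fintype.card (MIdx n k) = (n + k).choose n := by
  rw [Fintype.card_congr ((equivSumEq n k).trans (Sym.equivNatSumOfFintype _ k).symm),
    Sym.card_sym_eq_choose, Fintype.card_fin, Nat.add_right_comm, Nat.add_sub_cancel,
    Nat.choose_symm_add]

theorem exists_add_eq (γ : MIdx n (2 * k)) : ∃ α β : MIdx n k, α.1 + β.1 = γ.1 := by
  have hγ := γ.2
  obtain ⟨β, hβγ, hβ⟩ := Pi.exists_le_sum_eq γ.1 (∑ i, γ.1 i - k) (Nat.sub_le _ _)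
  have hα : ∑ i, (γ.1 - β) i = ∑ i, γ.1 i - ∑ i, β i :=
    sum_tsub_distrib _ fun i _ => hβγ i
  exact ⟨⟨γ.1 - β, by omega⟩, ⟨β, by omega⟩, tsub_add_cancel_of_le hβγ⟩

theorem card_two_mul_le (n k : ℕ) :
    Fintype.card (MIdx n (2 * k)) ≤ (Fintype.card (MIdx n k) + 1).choose 2 := by
  choose α β hαβ using @exists_add_eq n k
  rw [← Sym2.card]
  refine Fintype.card_le_of_injective (fun γ => s(α γ, β γ)) fun γ δ h => Subtype.ext ?_
  rw [← hαβ γ, ← hαβ δ]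
  rcases Sym2.eq_iff.mp h with ⟨h₁, h₂⟩ | ⟨h₁, h₂⟩
  · rw [h₁, h₂]
  · rw [h₁, h₂, add_comm]

theorem card_two_mul_le_choose (n k : ℕ) :
    (Fintype.card (MIdx n (2 * k)) : ℝ)
      ≤ 1 / 2 * ((n + k).choose n : ℝ) * (((n + k).choose n : ℝ) + 1) := by
  have h := card_two_mul_le n k
  rw [card_eq_choose n k] at h
  calc (Fintype.card (MIdx n (2 * k)) : ℝ) ≤ (((n + k).choose n + 1).choose 2 : ℕ) := by
        exact_mod_cast h
    _ = _ := by
        rw [Nat.cast_choose_two]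
        push_cast
        ring

def castSucc : MIdx n k ↪ MIdx n (k + 1) :=
  ⟨fun α => ⟨α.1, α.2.trans k.le_succ⟩, fun _ _ h => Subtype.ext (Subtype.mk.inj h)⟩

def addSingle (α : MIdx n k) (i : Fin n) : MIdx n (k + 1) :=
  ⟨α.1 + Pi.single i 1, by simpa [sum_add_distrib] using α.2⟩

theorem exists_addSingle_eq {α : MIdx n (k + 1)} (hα : α.1 ≠ 0) :
    ∃ β : MIdx n k, ∃ i, β.addSingle i = α := by
  obtain ⟨i, hi⟩ := Function.ne_iff.mp hα
  have hle : Pi.single i 1 ≤ α.1 := fun j => by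
    rcases eq_or_ne j i with rfl | hj
    · simpa [Nat.one_le_iff_ne_zero] using hi
    · simp [hj]
  have hsum : ∑ j, (α.1 j - (Pi.single i 1 : Fin n → ℕ) j) = ∑ j, α.1 j - 1 := by
    rw [sum_tsub_distrib _ fun j _ => hle j]
    simp
  have hα₂ := α.2
  exact ⟨⟨α.1 - Pi.single i 1, by simp only [Pi.sub_apply]; omega⟩, i,
    Subtype.ext (tsub_add_cancel_of_le hle)⟩

end MIdx

section Moments

variable {n k : ℕ} {R : ℝ} {y : (Fin n → ℕ) → ℝ}

theorem momMatY_addSingle_apply (α : MIdx n k) (i : Fin n) :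
    momMatY n (k + 1) y (α.addSingle i) (α.addSingle i)
      = y (fun j => α.1 j + α.1 j + if j = i then 2 else 0) := by
  simp only [momMatY, of_apply, MIdx.addSingle]
  congr 1
  funext j
  rcases eq_or_ne j i with rfl | hj
  · simp only [Pi.add_apply, Pi.single_eq_same, if_true]
    omega
  · simp [hj]

theorem sum_momMatY_addSingle_le (hloc : (locBall n (k + 1) R y).PosSemidef) (α : MIdx n k) :
    ∑ i, momMatY n (k + 1) y (α.addSingle i) (α.addSingle i)
      ≤ R * momMatY n (k + 1) y (MIdx.castSucc α) (MIdx.castSucc α) := by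
  have hα := hloc.diag_nonneg (i := α)
  simp only [locBall, of_apply] at hα
  simp only [momMatY_addSingle_apply]
  exact sub_nonneg.mp hα

theorem trace_momMatY_le (hR : 0 ≤ R) (hmom : (momMatY n (k + 1) y).PosSemidef)
    (hloc : (locBall n (k + 1) R y).PosSemidef) :
    (momMatY n (k + 1) y).trace ≤ y 0 + R * (momMatY n (k + 1) y).trace := by
  classical
  set M := momMatY n (k + 1) y
  let α₀ : MIdx n (k + 1) := ⟨0, by simp⟩
  have hα₀ : M α₀ α₀ = y 0 := rfl
  have hsub : univ.erase α₀ ⊆ univ.image fun p : MIdx n k × Fin n => p.1.addSingle p.2 := by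
    intro α hα
    obtain ⟨β, i, rfl⟩ :=
      MIdx.exists_addSingle_eq fun h => (mem_erase.mp hα).1 (Subtype.ext h)
    exact mem_image_of_mem _ (mem_univ (β, i))
  calc M.trace = M α₀ α₀ + ∑ α ∈ univ.erase α₀, M α α := (add_sum_erase _ _ (mem_univ α₀)).symm
    _ ≤ M α₀ α₀ + ∑ α ∈ univ.image (fun p : MIdx n k × Fin n => p.1.addSingle p.2), M α α := by
        gcongr M α₀ α₀ + ?_
        exact sum_le_sum_of_subset_of_nonneg hsub fun α _ _ => hmom.diag_nonneg
    _ ≤ M α₀ α₀ + ∑ p : MIdx n k × Fin n, M (p.1.addSingle p.2) (p.1.addSingle p.2) := by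
        gcongr
        exact sum_image_le_of_nonneg fun α _ => hmom.diag_nonneg
    _ = M α₀ α₀ + ∑ α : MIdx n k, ∑ i, M (α.addSingle i) (α.addSingle i) := by
        rw [Fintype.sum_prod_type]
    _ ≤ M α₀ α₀ + ∑ α : MIdx n k, R * M (MIdx.castSucc α) (MIdx.castSucc α) := by
        gcongr with α
        exact sum_momMatY_addSingle_le hloc α
    _ = M α₀ α₀ + R * ∑ α ∈ univ.map MIdx.castSucc, M α α := by
        rw [sum_map, mul_sum]
    _ ≤ y 0 + R * M.trace := by
        rw [hα₀]
        gcongr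
        exact sum_le_univ_sum_of_nonneg fun α => hmom.diag_nonneg

theorem sq_sum_abs_le_card_mul_trace_sq (hmom : (momMatY n k y).PosSemidef) :
    (∑ γ : MIdx n (2 * k), |y γ.1|) ^ 2
      ≤ Fintype.card (MIdx n (2 * k)) * (momMatY n k y).trace ^ 2 := by
  set M := momMatY n k y
  choose α β hαβ using @MIdx.exists_add_eq n k
  have hy : ∀ γ, y γ.1 = M (α γ) (β γ) := fun γ => by rw [← hαβ γ]; rfl
  have hinj : Function.Injective fun γ => (α γ, β γ) := fun γ δ h => by
    simp only [Prod.mk.injEq] at h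
    exact Subtype.ext (by rw [← hαβ γ, ← hαβ δ, h.1, h.2])
  calc (∑ γ : MIdx n (2 * k), |y γ.1|) ^ 2
      ≤ Fintype.card (MIdx n (2 * k)) * ∑ γ : MIdx n (2 * k), |y γ.1| ^ 2 := by
        simpa using
          sq_sum_le_card_mul_sum_sq (s := univ) (f := fun γ : MIdx n (2 * k) => |y γ.1|)
    _ = Fintype.card (MIdx n (2 * k)) * ∑ γ : MIdx n (2 * k), M (α γ) (β γ) ^ 2 := by
        simp only [sq_abs, hy]
    _ ≤ Fintype.card (MIdx n (2 * k)) * ∑ p : MIdx n k × MIdx n k, M p.1 p.2 ^ 2 := by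
        gcongr
        exact (sum_map univ ⟨_, hinj⟩ fun p => M p.1 p.2 ^ 2).symm.trans_le
          (sum_le_univ_sum_of_nonneg fun p => sq_nonneg _)
    _ ≤ Fintype.card (MIdx n (2 * k)) * M.trace ^ 2 := by
        rw [Fintype.sum_prod_type]
        gcongr
        exact hmom.sum_sq_le_trace_sq

theorem sum_abs_le_sqrt_mul_trace (hmom : (momMatY n k y).PosSemidef) :
    ∑ γ : MIdx n (2 * k), |y γ.1|
      ≤ √(1 / 2 * ((n + k).choose n : ℝ) * (((n + k).choose n : ℝ) + 1))
          * (momMatY n k y).trace := by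
  refine (pow_le_pow_iff_left₀ (sum_nonneg fun _ _ => abs_nonneg _)
    (mul_nonneg (Real.sqrt_nonneg _) hmom.trace_nonneg) two_ne_zero).mp ?_
  rw [mul_pow, Real.sq_sqrt (by positivity)]
  exact (sq_sum_abs_le_card_mul_trace_sq hmom).trans
    (by gcongr; exact MIdx.card_two_mul_le_choose n k)

end Moments

/-- If `y₀ = 1`, `M_k(y) ⪰ 0` and `M_{k−1}((R − ‖x‖₂²)·y) ⪰ 0` with
`R ∈ (0,1)`, then `tr(M_k(y)) ≤ 1/(1−R)` and `Σ_{γ∈ℕ^n_{2k}} |y_γ| ≤ √L/(1−R)` where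
`L = (1/2)·binom(n+k,n)·(binom(n+k,n)+1)`. -/
theorem stmt12 (n k : ℕ) (hk : 1 ≤ k) (R : ℝ) (hR0 : 0 < R) (hR1 : R < 1)
    (y : (Fin n → ℕ) → ℝ) (hy0 : y 0 = 1)
    (hmom : (momMatY n k y).PosSemidef)
    (hloc : (locBall n k R y).PosSemidef) :
    (momMatY n k y).trace ≤ 1 / (1 - R) ∧
      ∑ γ : MIdx n (2 * k), |y γ.1|
        ≤ Real.sqrt ((1 / 2) * (Nat.choose (n + k) n : ℝ) * ((Nat.choose (n + k) n : ℝ) + 1))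
            / (1 - R) := by
  obtain ⟨k, rfl⟩ := Nat.exists_eq_add_of_le' hk
  have htrace : (momMatY n (k + 1) y).trace ≤ 1 / (1 - R) := by
    rw [le_div_iff₀ (by linarith)]
    linarith [hy0 ▸ trace_momMatY_le hR0.le hmom hloc]
  refine ⟨htrace, (sum_abs_le_sqrt_mul_trace hmom).trans ?_⟩
  exact (mul_le_mul_of_nonneg_left htrace (Real.sqrt_nonneg _)).trans_eq (mul_one_div _ _)
end

section
/- Let n, k ∈ ℕ with k ≥ 1, let r ∈ (0,1), and let y = (y_γ)_{γ∈ℕ^n_{2k}} be a real sequence with y₀ = 1 such that: the moment matrix M_k(y) is positive semidefinite; for every α ∈ {0,1}^n \ {0} with ⌈|α|/2⌉ ≤ k, the localizing matrix M_{k−⌈|α|/2⌉}(x^α · y) is positive semidefinite; and the localizing matrices M_{k−1}((r − (x₁+⋯+xₙ))·y) and M_{k−1}((r² − (x₁+⋯+xₙ)²)·y) are positive semidefinite. Then L_y(r^j − (x₁+⋯+xₙ)^j) ≥ 0 for every j = 1,…,2k, and Σ_{γ∈ℕ^n_{2k}, γ≠0} y_γ ≤ r/(1 − r). -/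
/-
Write `S = x₁ + ⋯ + xₙ`. If a localizing matrix `M_t(g·y)` is positive semidefinite and
`deg p ≤ t`, its quadratic form at the coefficient vector of `p` is `L_y(p² g) ≥ 0`. Taking
`p = S^m` and `g = r − S`, resp. `g = r² − S²`, gives `L_y(S^{2m+1}) ≤ r L_y(S^{2m})` and
`L_y(S^{2m+2}) ≤ r² L_y(S^{2m})`, so `L_y(S^j) ≤ r^j` by induction from `L_y(1) = y₀ = 1`.
Writing `γ = 2β + α` with `α ∈ {0,1}ⁿ`, every `y_γ` with `|γ| ≤ 2k` is a diagonal entry of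
`M_k(y)` or of `M_{k−⌈|α|/2⌉}(x^α·y)`, hence nonnegative; bounding `y_γ` by its multinomial
multiple and grouping by `|γ| = j` gives `Σ_{γ≠0} y_γ ≤ Σ_{j=1}^{2k} L_y(S^j) ≤ Σ_j r^j ≤ r/(1−r)`.
-/

open Matrix BigOperators

/-- The localizing matrix `M_{k−u}(x^α · y)`, indexed by `ℕ^n_{k−u}`, with `(β,δ)` entry
`y_{β+δ+α}`. -/
noncomputable def locMono (n k u : ℕ) (α : Fin n → ℕ) (y : (Fin n → ℕ) → ℝ) :
    Matrix (MIdx n (k - u)) (MIdx n (k - u)) ℝ :=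
  Matrix.of fun β δ => y (fun j => β.1 j + δ.1 j + α j)

/-- The localizing matrix `M_{k−1}((r − (x₁+⋯+xₙ))·y)`, with `(α,β)` entry
`r·y_{α+β} − Σᵢ y_{α+β+eᵢ}`. -/
noncomputable def locSimplex1 (n k : ℕ) (r : ℝ) (y : (Fin n → ℕ) → ℝ) :
    Matrix (MIdx n (k - 1)) (MIdx n (k - 1)) ℝ :=
  Matrix.of fun α β =>
    r * y (fun j => α.1 j + β.1 j)
      - ∑ i : Fin n, y (fun j => α.1 j + β.1 j + if j = i then 1 else 0)

/-- The localizing matrix `M_{k−1}((r² − (x₁+⋯+xₙ)²)·y)`, with `(α,β)` entry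
`r²·y_{α+β} − Σᵢ Σᵢ' y_{α+β+eᵢ+eᵢ'}`. -/
noncomputable def locSimplex2 (n k : ℕ) (r : ℝ) (y : (Fin n → ℕ) → ℝ) :
    Matrix (MIdx n (k - 1)) (MIdx n (k - 1)) ℝ :=
  Matrix.of fun α β =>
    r ^ 2 * y (fun j => α.1 j + β.1 j)
      - ∑ i : Fin n, ∑ i' : Fin n,
          y (fun j => α.1 j + β.1 j + (if j = i then 1 else 0) + (if j = i' then 1 else 0))

open MvPolynomial Finset

section Riesz

variable {σ : Type*}

noncomputable def riesz (y : (σ → ℕ) → ℝ) : MvPolynomial σ ℝ →ₗ[ℝ] ℝ :=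
  (basisMonomials σ ℝ).constr ℝ fun u => y u

theorem riesz_monomial (y : (σ → ℕ) → ℝ) (u : σ →₀ ℕ) (c : ℝ) :
    riesz y (monomial u c) = c * y u := by
  have hu : monomial u (1 : ℝ) = basisMonomials σ ℝ u := by rw [coe_basisMonomials]
  rw [← mul_one c, ← smul_eq_mul, ← smul_monomial, map_smul, hu, riesz,
    Module.Basis.constr_basis, smul_eq_mul, smul_eq_mul, mul_one]

theorem riesz_apply (y : (σ → ℕ) → ℝ) (p : MvPolynomial σ ℝ) :
    riesz y p = ∑ u ∈ p.support, coeff u p * y u := by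
  conv_lhs => rw [p.as_sum]
  simp only [map_sum, riesz_monomial]

theorem riesz_mul (y : (σ → ℕ) → ℝ) (p q : MvPolynomial σ ℝ) :
    riesz y (p * q) = riesz (fun d => riesz (fun e => y (d + e)) q) p := by
  induction p using MvPolynomial.induction_on' with
  | monomial u a =>
    rw [riesz_monomial]
    induction q using MvPolynomial.induction_on' with
    | monomial v b => rw [monomial_mul, riesz_monomial, riesz_monomial, Finsupp.coe_add]; ring
    | add q₁ q₂ h₁ h₂ => rw [mul_add, map_add, h₁, h₂, map_add, mul_add]
  | add p₁ p₂ h₁ h₂ => rw [add_mul, map_add, map_add, h₁, h₂]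

theorem monomial_equivFunOnFinite_symm [Fintype σ] (d : σ → ℕ) :
    monomial (Finsupp.equivFunOnFinite.symm d) (1 : ℝ) = ∏ i, X i ^ d i := by
  rw [monomial_eq, C_1, one_mul, Finsupp.prod_fintype _ _ (fun _ => pow_zero _)]
  simp only [Finsupp.coe_equivFunOnFinite_symm]

theorem riesz_sum_X_pow [Fintype σ] [DecidableEq σ] (y : (σ → ℕ) → ℝ) (m : ℕ) :
    riesz y ((∑ i, X i) ^ m) = ∑ d ∈ univ.piAntidiag m, (Nat.multinomial univ d : ℝ) * y d := by
  rw [sum_pow_eq_sum_piAntidiag, map_sum]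
  refine sum_congr rfl fun d _ => ?_
  rw [← monomial_equivFunOnFinite_symm, ← map_natCast C, C_mul_monomial, mul_one, riesz_monomial,
    Finsupp.coe_equivFunOnFinite_symm]

theorem riesz_C (y : (σ → ℕ) → ℝ) (c : ℝ) : riesz y (C c) = c * y 0 := riesz_monomial y 0 c

theorem riesz_sum_X [Fintype σ] [DecidableEq σ] (y : (σ → ℕ) → ℝ) :
    riesz y (∑ i, X i) = ∑ i, y (Pi.single i 1) := by
  simp only [map_sum, X, riesz_monomial, one_mul, Finsupp.single_eq_pi_single]

theorem riesz_pow_mul_C_sub_pow (y : (σ → ℕ) → ℝ) (p : MvPolynomial σ ℝ) (c : ℝ) (a b : ℕ) :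
    riesz y (p ^ a * (C c - p ^ b)) = c * riesz y (p ^ a) - riesz y (p ^ (a + b)) := by
  rw [mul_sub, mul_comm, C_mul', pow_add, map_sub, map_smul, smul_eq_mul]

theorem totalDegree_sum_X_pow_le {R : Type*} [CommSemiring R] [Nontrivial R] [Fintype σ] (m : ℕ) :
    ((∑ i, X i : MvPolynomial σ R) ^ m).totalDegree ≤ m := by
  have h : (∑ i, X i : MvPolynomial σ R).totalDegree ≤ 1 :=
    (totalDegree_finsetSum _ _).trans (Finset.sup_le fun i _ => (totalDegree_X i).le)
  simpa using (totalDegree_pow _ m).trans (Nat.mul_le_mul_left m h)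

end Riesz

theorem sum_mIdx_coeff_mul_eq_riesz {n t : ℕ} (F : (Fin n → ℕ) → ℝ) {p : MvPolynomial (Fin n) ℝ}
    (hp : p.totalDegree ≤ t) :
    ∑ α : MIdx n t, coeff (Finsupp.equivFunOnFinite.symm α.1) p * F α.1 = riesz F p := by
  rw [riesz_apply]
  refine sum_bij_ne_zero (fun α _ _ => Finsupp.equivFunOnFinite.symm α.1)
    (fun α _ hα => mem_support_iff.2 (left_ne_zero_of_mul hα))
    (fun α _ _ β _ _ h => Subtype.ext (Finsupp.equivFunOnFinite.symm.injective h))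
    (fun u hu hu' => ⟨⟨u, ?_⟩, mem_univ _, by simpa using hu', Finsupp.equivFunOnFinite_symm_coe u⟩)
    (fun α _ _ => by rw [Finsupp.coe_equivFunOnFinite_symm])
  · rw [← Finsupp.sum_fintype u (fun _ e => e) (fun _ => rfl)]
    exact (le_totalDegree hu).trans hp

/-- The localizing matrix `M_t(g · y)`. -/
noncomputable def locMat (n t : ℕ) (g : MvPolynomial (Fin n) ℝ) (y : (Fin n → ℕ) → ℝ) :
    Matrix (MIdx n t) (MIdx n t) ℝ :=
  Matrix.of fun α β => riesz (fun e => y (α.1 + β.1 + e)) g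

theorem riesz_sq_mul_nonneg_of_posSemidef {n t : ℕ} {g : MvPolynomial (Fin n) ℝ}
    {y : (Fin n → ℕ) → ℝ} (h : (locMat n t g y).PosSemidef) {p : MvPolynomial (Fin n) ℝ}
    (hp : p.totalDegree ≤ t) : 0 ≤ riesz y (p ^ 2 * g) := by
  set H : (Fin n → ℕ) → ℝ := fun d => riesz (fun e => y (d + e)) g
  set v : MIdx n t → ℝ := fun α => coeff (Finsupp.equivFunOnFinite.symm α.1) p
  have hv (F : (Fin n → ℕ) → ℝ) : ∑ α, v α * F α.1 = riesz F p :=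
    sum_mIdx_coeff_mul_eq_riesz F hp
  calc 0 ≤ star v ⬝ᵥ (locMat n t g y *ᵥ v) := h.dotProduct_mulVec_nonneg v
    _ = ∑ α, v α * ∑ β, v β * H (α.1 + β.1) := by
      simp only [dotProduct, mulVec, star_trivial, locMat, of_apply, H, mul_comm (v _)]
    _ = riesz (fun d => riesz (fun e => H (d + e)) p) p := by
      rw [← hv]
      exact sum_congr rfl fun α _ => by rw [← hv]
    _ = riesz y (p ^ 2 * g) := by rw [← riesz_mul, ← riesz_mul, sq]

theorem locSimplex1_eq (n k : ℕ) (r : ℝ) (y : (Fin n → ℕ) → ℝ) :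
    locSimplex1 n k r y = locMat n (k - 1) (C r - ∑ i, X i) y := by
  ext α β
  simp only [locSimplex1, locMat, of_apply, map_sub, riesz_C, riesz_sum_X, add_zero]
  congr 2 with i
  congr 1 with j
  simp [Pi.single_apply]

theorem locSimplex2_eq (n k : ℕ) (r : ℝ) (y : (Fin n → ℕ) → ℝ) :
    locSimplex2 n k r y = locMat n (k - 1) (C (r ^ 2) - (∑ i, X i) ^ 2) y := by
  ext α β
  simp only [locSimplex2, locMat, of_apply, map_sub, riesz_C, sq, riesz_mul, riesz_sum_X, add_zero]
  congr 2 with i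
  congr 1 with i'
  congr 1 with j
  simp [Pi.single_apply, add_assoc]

theorem sum_filter_degree_multinomial_mul_eq_riesz {n t j : ℕ} (hj : j ≤ t)
    (y : (Fin n → ℕ) → ℝ) :
    ∑ γ ∈ univ.filter (fun γ : MIdx n t => ∑ i, γ.1 i = j),
        (Nat.multinomial univ γ.1 : ℝ) * y γ.1 = riesz y ((∑ i, X i) ^ j) := by
  rw [riesz_sum_X_pow]
  refine sum_bij (fun γ _ => γ.1) (fun γ hγ => ?_) (fun _ _ _ _ => Subtype.ext)
    (fun d hd => ?_) (fun _ _ => rfl)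
  · simpa [mem_piAntidiag] using (mem_filter.1 hγ).2
  · have hd : ∑ i, d i = j := by simpa [mem_piAntidiag] using hd
    exact ⟨⟨d, hd ▸ hj⟩, by simpa using hd, rfl⟩

theorem sum_filter_ne_zero_eq_sum_Ico {M : Type*} [AddCommMonoid M] {n t : ℕ}
    (f : MIdx n t → M) :
    ∑ γ ∈ univ.filter (fun γ : MIdx n t => γ.1 ≠ 0), f γ
      = ∑ j ∈ Ico 1 (t + 1), ∑ γ ∈ univ.filter (fun γ : MIdx n t => ∑ i, γ.1 i = j), f γ := by
  have hzero (γ : MIdx n t) : γ.1 = 0 ↔ ∑ i, γ.1 i = 0 := by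
    simp [funext_iff, sum_eq_zero_iff]
  rw [← sum_fiberwise_of_maps_to (g := fun γ : MIdx n t => ∑ i, γ.1 i)]
  · refine sum_congr rfl fun j hj => ?_
    rw [filter_filter]
    refine sum_congr (filter_congr fun γ _ => ?_) fun _ _ => rfl
    rw [Ne, hzero γ]
    have := (mem_Ico.1 hj).1
    omega
  · intro γ hγ
    have := (hzero γ).not.1 (mem_filter.1 hγ).2
    have := γ.2
    exact mem_Ico.2 ⟨by omega, by omega⟩

theorem moment_nonneg {n k : ℕ} {y : (Fin n → ℕ) → ℝ} (hmom : (momMatY n k y).PosSemidef)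
    (hlocα : ∀ α : Fin n → ℕ, (∀ i, α i ≤ 1) → α ≠ 0 → (∑ i, α i + 1) / 2 ≤ k →
      (locMono n k ((∑ i, α i + 1) / 2) α y).PosSemidef)
    {γ : Fin n → ℕ} (hγ : ∑ i, γ i ≤ 2 * k) : 0 ≤ y γ := by
  set α : Fin n → ℕ := fun i => γ i % 2
  set β : Fin n → ℕ := fun i => γ i / 2
  have hsum : ∑ i, γ i = 2 * ∑ i, β i + ∑ i, α i := by
    rw [mul_sum, ← sum_add_distrib]
    exact sum_congr rfl fun i _ => (Nat.div_add_mod (γ i) 2).symm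
  by_cases hα : α = 0
  · have hγβ : γ = fun j => β j + β j := funext fun j => by
      have := congrFun hα j
      simp only [α, β, Pi.zero_apply] at this ⊢
      omega
    have hβ : ∑ i, β i ≤ k := by
      simp only [hα, Pi.zero_apply, sum_const_zero] at hsum
      omega
    rw [hγβ]
    exact hmom.diag_nonneg (i := ⟨β, hβ⟩)
  · have hα1 : 1 ≤ ∑ i, α i :=
      Nat.one_le_iff_ne_zero.2 fun h => hα (funext fun i => sum_eq_zero_iff.1 h i (mem_univ i))
    have hγβα : γ = fun j => β j + β j + α j := funext fun j => by
      simp only [α, β]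
      omega
    rw [hγβα]
    exact (hlocα α (fun i => Nat.le_of_lt_succ (Nat.mod_lt _ two_pos)) hα (by omega)).diag_nonneg
      (i := ⟨β, by omega⟩)

theorem le_pow_of_step_bounds {s : ℕ → ℝ} {r : ℝ} {N : ℕ} (hr : 0 ≤ r) (h0 : s 0 ≤ 1)
    (hodd : ∀ m, 2 * m + 1 ≤ N → s (2 * m + 1) ≤ r * s (2 * m))
    (heven : ∀ m, 2 * m + 2 ≤ N → s (2 * m + 2) ≤ r ^ 2 * s (2 * m)) {j : ℕ} (hj : j ≤ N) :
    s j ≤ r ^ j := by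
  have hs_even (m : ℕ) (hm : 2 * m ≤ N) : s (2 * m) ≤ r ^ (2 * m) := by
    induction m with
    | zero => simpa using h0
    | succ m ih =>
      calc s (2 * (m + 1)) ≤ r ^ 2 * s (2 * m) := heven m (by omega)
        _ ≤ r ^ 2 * r ^ (2 * m) := by gcongr; exact ih (by omega)
        _ = r ^ (2 * (m + 1)) := by ring
  obtain ⟨m, rfl | rfl⟩ := j.even_or_odd'
  · exact hs_even m hj
  · calc s (2 * m + 1) ≤ r * s (2 * m) := hodd m hj
      _ ≤ r * r ^ (2 * m) := by gcongr; exact hs_even m (by omega)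
      _ = r ^ (2 * m + 1) := by ring

theorem riesz_sum_X_pow_le_pow {n k : ℕ} {r : ℝ} (hr : 0 ≤ r) {y : (Fin n → ℕ) → ℝ}
    (hy0 : y 0 ≤ 1) (hloc1 : (locSimplex1 n k r y).PosSemidef)
    (hloc2 : (locSimplex2 n k r y).PosSemidef) {j : ℕ} (hj : j ≤ 2 * k) :
    riesz y ((∑ i, X i) ^ j) ≤ r ^ j := by
  set S : MvPolynomial (Fin n) ℝ := ∑ i, X i
  have hS (m : ℕ) (hm : m ≤ k - 1) : (S ^ m).totalDegree ≤ k - 1 :=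
    (totalDegree_sum_X_pow_le m).trans hm
  refine le_pow_of_step_bounds (s := fun j => riesz y (S ^ j)) hr ?_ (fun m hm => ?_)
    (fun m hm => ?_) hj
  · rwa [pow_zero, ← C_1, riesz_C, one_mul]
  · have hloc : (locMat n (k - 1) (C r - S ^ 1) y).PosSemidef := by
      rw [pow_one]
      exact locSimplex1_eq n k r y ▸ hloc1
    have h := riesz_sq_mul_nonneg_of_posSemidef hloc (hS m (by omega))
    rw [← pow_mul', riesz_pow_mul_C_sub_pow] at h
    linarith
  · have hloc : (locMat n (k - 1) (C (r ^ 2) - S ^ 2) y).PosSemidef :=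
      locSimplex2_eq n k r y ▸ hloc2
    have h := riesz_sq_mul_nonneg_of_posSemidef hloc (hS m (by omega))
    rw [← pow_mul', riesz_pow_mul_C_sub_pow] at h
    linarith

theorem stmt14_general (n k : ℕ) (r : ℝ) (hr0 : 0 < r) (hr1 : r < 1)
    (y : (Fin n → ℕ) → ℝ) (hy0 : y 0 = 1)
    (hmom : (momMatY n k y).PosSemidef)
    (hlocα : ∀ α : Fin n → ℕ, (∀ i, α i ≤ 1) → α ≠ 0 → (∑ i, α i + 1) / 2 ≤ k →
      (locMono n k ((∑ i, α i + 1) / 2) α y).PosSemidef)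
    (hloc1 : (locSimplex1 n k r y).PosSemidef)
    (hloc2 : (locSimplex2 n k r y).PosSemidef) :
    (∀ j : ℕ, 1 ≤ j → j ≤ 2 * k →
      0 ≤ r ^ j * y 0
        - ∑ γ ∈ Finset.univ.filter (fun γ : MIdx n (2 * k) => ∑ i, γ.1 i = j),
            (Nat.multinomial Finset.univ γ.1 : ℝ) * y γ.1) ∧
    ∑ γ ∈ Finset.univ.filter (fun γ : MIdx n (2 * k) => γ.1 ≠ 0), y γ.1 ≤ r / (1 - r) := by
  have hpow (j : ℕ) (hj : j ≤ 2 * k) : riesz y ((∑ i, X i) ^ j) ≤ r ^ j :=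
    riesz_sum_X_pow_le_pow hr0.le hy0.le hloc1 hloc2 hj
  refine ⟨fun j hj1 hj2 => ?_, ?_⟩
  · rw [hy0, mul_one, sum_filter_degree_multinomial_mul_eq_riesz hj2]
    linarith [hpow j hj2]
  calc ∑ γ ∈ univ.filter (fun γ : MIdx n (2 * k) => γ.1 ≠ 0), y γ.1
      ≤ ∑ γ ∈ univ.filter (fun γ : MIdx n (2 * k) => γ.1 ≠ 0),
          (Nat.multinomial univ γ.1 : ℝ) * y γ.1 :=
        sum_le_sum fun γ _ => le_mul_of_one_le_left (moment_nonneg hmom hlocα γ.2)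
          (by exact_mod_cast Nat.multinomial_pos _ _)
    _ = ∑ j ∈ Ico 1 (2 * k + 1), riesz y ((∑ i, X i) ^ j) := by
        rw [sum_filter_ne_zero_eq_sum_Ico]
        exact sum_congr rfl fun j hj =>
          sum_filter_degree_multinomial_mul_eq_riesz (Nat.lt_succ_iff.1 (mem_Ico.1 hj).2) y
    _ ≤ ∑ j ∈ Ico 1 (2 * k + 1), r ^ j :=
        sum_le_sum fun j hj => hpow j (Nat.lt_succ_iff.1 (mem_Ico.1 hj).2)
    _ ≤ r / (1 - r) := by
        simpa using geom_sum_Ico_le_of_lt_one (m := 1) (n := 2 * k + 1) hr0.le hr1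

/-- Under `y₀ = 1`, `M_k(y) ⪰ 0`, PSD-ness of the localizing matrices of
the monomials `x^α` (`α ∈ {0,1}^n \ {0}`), of `r − Σxᵢ`, and of `r² − (Σxᵢ)²` with
`r ∈ (0,1)`: `L_y(r^j − (x₁+⋯+xₙ)^j) ≥ 0` for `j = 1,…,2k`, and
`Σ_{γ∈ℕ^n_{2k}, γ≠0} y_γ ≤ r/(1−r)`. -/
theorem stmt14 (n k : ℕ) (hk : 1 ≤ k) (r : ℝ) (hr0 : 0 < r) (hr1 : r < 1)
    (y : (Fin n → ℕ) → ℝ) (hy0 : y 0 = 1)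
    (hmom : (momMatY n k y).PosSemidef)
    (hlocα : ∀ α : Fin n → ℕ, (∀ i, α i ≤ 1) → α ≠ 0 → (∑ i, α i + 1) / 2 ≤ k →
      (locMono n k ((∑ i, α i + 1) / 2) α y).PosSemidef)
    (hloc1 : (locSimplex1 n k r y).PosSemidef)
    (hloc2 : (locSimplex2 n k r y).PosSemidef) :
    (∀ j : ℕ, 1 ≤ j → j ≤ 2 * k →
      0 ≤ r ^ j * y 0
        - ∑ γ ∈ Finset.univ.filter (fun γ : MIdx n (2 * k) => ∑ i, γ.1 i = j),
            (Nat.multinomial Finset.univ γ.1 : ℝ) * y γ.1) ∧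
    ∑ γ ∈ Finset.univ.filter (fun γ : MIdx n (2 * k) => γ.1 ≠ 0), y γ.1 ≤ r / (1 - r) :=
  stmt14_general n k r hr0 hr1 y hy0 hmom hlocα hloc1 hloc2
end

section
/- Let n ≥ 1 and a, b, c ∈ (0, ∞). Let W be the (n+1)×(n+1) real symmetric matrix with W₁₁ = 1, W₁ⱼ = Wⱼ₁ = a for 2 ≤ j ≤ n+1, Wⱼⱼ = b for 2 ≤ j ≤ n+1, and Wᵢⱼ = c for 2 ≤ i, j ≤ n+1 with i ≠ j. Then for every λ ∈ ℝ: det(W − λ·I_{n+1}) = (b − c − λ)^{n−1} · [ (1 − λ)(b − c − λ) − n·(a² − (1 − λ)c) ]. -/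
open Matrix BigOperators

/-- Characteristic-polynomial determinant identity for the arrowhead-type
matrix `W` with `W₁₁ = 1`, first row/column entries `a`, diagonal entries `b` and
off-diagonal entries `c` in the lower block. -/
theorem stmt15 (n : ℕ) (hn : 1 ≤ n) (a b c : ℝ) (ha : 0 < a) (hb : 0 < b) (hc : 0 < c)
    (W : Matrix (Fin (n + 1)) (Fin (n + 1)) ℝ)
    (hW : W = Matrix.of fun i j =>
      if i = 0 then (if j = 0 then (1 : ℝ) else a)
      else if j = 0 then a
      else if i = j then b else c) :
    ∀ lam : ℝ,
      (W - lam • (1 : Matrix (Fin (n + 1)) (Fin (n + 1)) ℝ)).det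
        = (b - c - lam) ^ (n - 1)
            * ((1 - lam) * (b - c - lam) - n * (a ^ 2 - (1 - lam) * c)) := by
  obtain ⟨m, rfl⟩ : ∃ m, n = m + 1 := ⟨n - 1, (Nat.succ_pred_eq_of_pos hn).symm⟩
  have hc' : c ≠ 0 := ne_of_gt hc
  -- generic case
  have key : ∀ lam : ℝ, b - c - lam ≠ 0 → 1 - lam - a ^ 2 / c ≠ 0 →
      (W - lam • (1 : Matrix (Fin (m + 1 + 1)) (Fin (m + 1 + 1)) ℝ)).det
        = (b - c - lam) ^ (m + 1 - 1)
            * ((1 - lam) * (b - c - lam) - (m + 1 : ℕ) * (a ^ 2 - (1 - lam) * c)) := by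
    intro lam hα hd0
    set α := b - c - lam with hαdef
    set d0 := 1 - lam - a ^ 2 / c with hd0def
    set d : Fin (m + 1 + 1) → ℝ := fun i => if i = 0 then d0 else α with hd
    set u : Fin (m + 1 + 1) → ℝ := fun i => if i = 0 then a / c else 1 with hu
    set v : Fin (m + 1 + 1) → ℝ := fun i => if i = 0 then a else c with hv
    set w : Fin (m + 1 + 1) → ℝ := fun i => u i / d i with hw
    have hdw : ∀ i, d i * w i = u i := by
      intro i
      simp only [hw]
      rw [mul_div_cancel₀]
      by_cases h : i = 0 <;> simp [hd, h, hd0, hα]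
    have hM : W - lam • (1 : Matrix (Fin (m + 1 + 1)) (Fin (m + 1 + 1)) ℝ)
        = Matrix.diagonal d * (1 + Matrix.replicateCol Unit w * Matrix.replicateRow Unit v) := by
      ext i j
      have hcolrow : (Matrix.replicateCol Unit w * Matrix.replicateRow Unit v) i j = w i * v j := by
        simp [Matrix.mul_apply, Matrix.replicateCol, Matrix.replicateRow]
      rw [Matrix.diagonal_mul]
      simp only [Matrix.sub_apply, Matrix.smul_apply, Matrix.add_apply, hcolrow, hW,
        Matrix.of_apply, Matrix.one_apply, smul_eq_mul, mul_add]
      rw [← mul_assoc, hdw i]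
      rcases eq_or_ne i 0 with hi | hi <;> rcases eq_or_ne j 0 with hj | hj
      · subst hi; subst hj
        simp only [hu, hv, hd, hd0def, if_pos rfl, if_true, mul_one]
        field_simp
        ring
      · subst hi
        simp [hu, hv, hd, hj, Ne.symm hj]
        field_simp
      · subst hj
        simp [hu, hv, hd, hi]
      · rcases eq_or_ne i j with hij | hij
        · subst hij
          simp [hu, hv, hd, hi, hαdef]
          ring
        · simp [hu, hv, hd, hi, hj, hij]
    rw [hM, Matrix.det_mul, Matrix.det_diagonal, Matrix.det_one_add_replicateCol_mul_replicateRow]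
    have hprod : (∏ i, d i) = d0 * α ^ (m + 1) := by
      rw [Fin.prod_univ_succ]
      simp [hd, Fin.succ_ne_zero, Finset.prod_const]
    have hdot : v ⬝ᵥ w = a * (a / c / d0) + (m + 1 : ℕ) * (c * (1 / d0 * 0 + 1 / α)) := by
      rw [dotProduct, Fin.sum_univ_succ]
      simp [hv, hw, hu, hd, Fin.succ_ne_zero, Finset.sum_const, mul_comm]
    have hdot' : v ⬝ᵥ w = a * (a / c / d0) + (m + 1 : ℕ) * (c / α) := by
      rw [hdot]; ring
    rw [hprod, hdot']
    have h1lam : (1 : ℝ) - lam = d0 + a ^ 2 / c := by rw [hd0def]; ring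
    rw [Nat.add_sub_cancel, h1lam]
    push_cast
    clear hdw hM hprod hdot hdot' h1lam
    clear hw hv hu hd
    clear w v u d
    clear hd0def hαdef
    clear_value d0 α
    field_simp
    ring
  -- extend by continuity
  have hfc : Continuous fun lam : ℝ =>
      (W - lam • (1 : Matrix (Fin (m + 1 + 1)) (Fin (m + 1 + 1)) ℝ)).det :=
    (continuous_const.sub (continuous_id.smul continuous_const)).matrix_det
  have hgc : Continuous fun lam : ℝ =>
      (b - c - lam) ^ (m + 1 - 1)
        * ((1 - lam) * (b - c - lam) - ((m : ℝ) + 1) * (a ^ 2 - (1 - lam) * c)) := by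
    fun_prop
  have hdense : Dense (({b - c, 1 - a ^ 2 / c} : Set ℝ)ᶜ) :=
    Set.Countable.dense_compl ℝ ((Set.toFinite ({b - c, 1 - a ^ 2 / c} : Set ℝ)).countable)
  have heq := Continuous.ext_on hdense hfc hgc ?_
  · intro lam
    have := congrFun heq lam
    simpa using this
  · intro x hx
    simp only [Set.mem_compl_iff, Set.mem_insert_iff, Set.mem_singleton_iff, not_or] at hx
    have h1 : b - c - x ≠ 0 := sub_ne_zero_of_ne (fun h => hx.1 h.symm)
    have h2 : 1 - x - a ^ 2 / c ≠ 0 := by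
      intro h
      apply hx.2
      linarith
    have := key x h1 h2
    simpa using this
end

section
/- Let A be a real symmetric positive semidefinite N×N matrix with tr(A) > 0. Then the smallest eigenvalue of A satisfies λ_min(A) ≥ ((N − 1)/tr(A))^{N−1} · det(A). -/
/-!
Diagonalise `A`: its determinant is the product and its trace the sum of its (nonnegative)
eigenvalues. Splitting off the smallest eigenvalue `λ`, AM-GM bounds the product of the other
`N - 1` eigenvalues by `(tr A / (N - 1)) ^ (N - 1)`, so `((N - 1) / tr A) ^ (N - 1) * det A ≤ λ`.
Finally every Rayleigh quotient of `A` is at least `λ`, since `A - λ` is positive semidefinite.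
-/

open Matrix BigOperators

open Finset in
theorem Real.prod_le_sum_div_card_pow {ι : Type*} (s : Finset ι) (z : ι → ℝ)
    (hz : ∀ i ∈ s, 0 ≤ z i) : ∏ i ∈ s, z i ≤ ((∑ i ∈ s, z i) / #s) ^ #s := by
  rcases s.eq_empty_or_nonempty with rfl | hs
  · simp
  have hamgm := Real.geom_mean_le_arith_mean s 1 z (by simp) (by simpa using hs) hz
  simp only [Pi.one_apply, Real.rpow_one, one_mul, sum_const, nsmul_eq_mul, mul_one] at hamgm
  rwa [Real.rpow_inv_le_iff_of_pos (prod_nonneg hz) (div_nonneg (sum_nonneg hz) (by positivity))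
    (by simpa using hs), Real.rpow_natCast] at hamgm

open Finset in
theorem card_sub_one_div_sum_pow_mul_prod_le {ι : Type*} [Fintype ι] [DecidableEq ι]
    (μ : ι → ℝ) (hμ : ∀ j, 0 ≤ μ j) (hsum : 0 < ∑ j, μ j) (i : ι) :
    (((Fintype.card ι : ℝ) - 1) / ∑ j, μ j) ^ (Fintype.card ι - 1) * ∏ j, μ j ≤ μ i := by
  set s := univ.erase i
  set t := ∑ j, μ j
  have hcard : #s = Fintype.card ι - 1 := by simp [s, card_erase_of_mem]
  have hcardR : (Fintype.card ι : ℝ) - 1 = #s := by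
    rw [hcard, Nat.cast_pred (Fintype.card_pos_iff.mpr ⟨i⟩)]
  have hs : ∑ j ∈ s, μ j ≤ t :=
    sum_le_sum_of_subset_of_nonneg (subset_univ _) fun j _ _ => hμ j
  have hrest : (#s / t) ^ #s * ∏ j ∈ s, μ j ≤ 1 :=
    calc (#s / t) ^ #s * ∏ j ∈ s, μ j
        ≤ (#s / t) ^ #s * ((∑ j ∈ s, μ j) / #s) ^ #s := by
          gcongr
          exact Real.prod_le_sum_div_card_pow s μ fun j _ => hμ j
      _ = ((∑ j ∈ s, μ j) / t * (#s / #s)) ^ #s := by rw [← mul_pow]; ring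
      _ ≤ 1 := pow_le_one₀ (mul_nonneg (div_nonneg (sum_nonneg fun j _ => hμ j) hsum.le)
          (by positivity)) (mul_le_one₀ (div_le_one_of_le₀ hs hsum.le) (by positivity)
          (div_self_le_one _))
  rw [hcardR, ← hcard, ← mul_prod_erase univ μ (mem_univ i), mul_left_comm]
  exact mul_le_of_le_one_right (hμ i) hrest

open Pointwise in
theorem Matrix.IsHermitian.mul_dotProduct_self_le {n : Type*} [Fintype n] [DecidableEq n]
    {A : Matrix n n ℝ} (hA : A.IsHermitian) {c : ℝ} (hc : ∀ i, c ≤ hA.eigenvalues i)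
    (x : n → ℝ) : c * (x ⬝ᵥ x) ≤ x ⬝ᵥ A *ᵥ x := by
  have hB : (A - algebraMap ℝ _ c).IsHermitian :=
    hA.sub (by simp [IsHermitian, algebraMap_eq_diagonal])
  -- the spectrum of `A - c` is the spectrum of `A` shifted by `c`, hence nonnegative
  have hpsd : (A - algebraMap ℝ _ c).PosSemidef := by
    refine hB.posSemidef_iff_eigenvalues_nonneg.mpr fun i => ?_
    have hmem : hB.eigenvalues i ∈ spectrum ℝ A - {c} :=
      spectrum.sub_singleton_eq A c ▸ hB.eigenvalues_mem_spectrum_real i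
    rw [hA.spectrum_real_eq_range_eigenvalues] at hmem
    obtain ⟨_, ⟨j, rfl⟩, _, rfl, hj⟩ := hmem
    simpa [← hj] using hc j
  simpa [sub_mulVec, Algebra.algebraMap_eq_smul_one, dotProduct_sub, sub_nonneg, smul_mulVec,
    dotProduct_smul] using hpsd.dotProduct_mulVec_nonneg x

theorem Matrix.IsHermitian.le_eigMin {m : Type} [Fintype m] [DecidableEq m] [Nonempty m]
    {A : Matrix m m ℝ} (hA : A.IsHermitian) {c : ℝ} (hc : ∀ i, c ≤ hA.eigenvalues i) :
    c ≤ eigMin A := by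
  obtain ⟨i⟩ := ‹Nonempty m›
  have : Nonempty {v : m → ℝ // v ⬝ᵥ v = 1} := ⟨⟨Pi.single i 1, by simp⟩⟩
  exact le_ciInf fun v => by simpa [v.2] using hA.mul_dotProduct_self_le hc v.1

/-- For a real symmetric positive semidefinite `N×N` matrix `A` with
`tr(A) > 0`, `λ_min(A) ≥ ((N−1)/tr(A))^{N−1} · det(A)`. -/
theorem stmt16 (N : ℕ) (A : Matrix (Fin N) (Fin N) ℝ) (hA : A.PosSemidef)
    (htr : 0 < A.trace) :
    (((N : ℝ) - 1) / A.trace) ^ (N - 1) * A.det ≤ eigMin A := by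
  have : Nonempty (Fin N) := by
    by_contra h
    have : IsEmpty (Fin N) := not_nonempty_iff.mp h
    simp [trace] at htr
  have htr_eq : A.trace = ∑ i, hA.1.eigenvalues i := by simpa using hA.1.trace_eq_sum_eigenvalues
  have hdet_eq : A.det = ∏ i, hA.1.eigenvalues i := by simpa using hA.1.det_eq_prod_eigenvalues
  obtain ⟨i₀, hi₀⟩ := Finite.exists_min hA.1.eigenvalues
  calc (((N : ℝ) - 1) / A.trace) ^ (N - 1) * A.det
      = (((Fintype.card (Fin N) : ℝ) - 1) / ∑ i, hA.1.eigenvalues i) ^ (Fintype.card (Fin N) - 1)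
          * ∏ i, hA.1.eigenvalues i := by rw [Fintype.card_fin, htr_eq, hdet_eq]
    _ ≤ hA.1.eigenvalues i₀ := card_sub_one_div_sum_pow_mul_prod_le _ hA.eigenvalues_nonneg
          (htr_eq ▸ htr) i₀
    _ ≤ eigMin A := hA.1.le_eigMin hi₀
end

section
/- Let n, k ∈ ℕ with k ≥ 1, and let y = (y_γ)_{γ∈ℕ^n_{2k}} be a real sequence with y₀ = 1 such that for every δ ∈ ℕ^n_{2(k−1)}: y_δ − Σ_{i=1}^n y_{δ + 2eᵢ} = 0 (where eᵢ is the i-th unit multi-index); equivalently, the localizing matrix M_{k−1}((1 − ‖x‖₂²)·y) is the zero matrix. Then Σ_{α∈ℕ^n_k} ( k! / ((k − |α|)! · α₁!⋯αₙ!) ) · y_{2α} = 2^k. -/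
open Matrix BigOperators

/-!
Let `L` be the linear functional on `ℝ[t₁, …, tₙ]` with `L(t^d) = y_{2d}`, i.e. the Riesz functional
of `y` in the squared variables `tᵢ = xᵢ²`. The localizing condition says exactly that
`L(q · (t₁ + ⋯ + tₙ)) = L(q)` whenever `deg q < k`, so by induction `L((1 + Σ tᵢ)^m) = 2^m` for
`m ≤ k`. Expanding `(1 + Σ tᵢ)^k` by the multinomial theorem turns `L((1 + Σ tᵢ)^k)` into the sum
of the statement.
-/

open Finset

namespace MvPolynomial

variable {σ R : Type*} [CommSemiring R]

noncomputable def rieszFunctional (z : (σ → ℕ) → R) : MvPolynomial σ R →ₗ[R] R :=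
  Finsupp.linearCombination R (fun d : σ →₀ ℕ => z d) ∘ₗ
    (AddMonoidAlgebra.coeffLinearEquiv R).toLinearMap

@[simp]
theorem rieszFunctional_monomial (z : (σ → ℕ) → R) (d : σ →₀ ℕ) (c : R) :
    rieszFunctional z (monomial d c) = c * z d :=
  Finsupp.linearCombination_single R c d

theorem rieszFunctional_one (z : (σ → ℕ) → R) : rieszFunctional z 1 = z 0 := by
  rw [one_def, rieszFunctional_monomial, one_mul, Finsupp.coe_zero]

theorem rieszFunctional_mul_sum_X [Fintype σ] [DecidableEq σ] {z : (σ → ℕ) → R} {m : ℕ}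
    (hz : ∀ d : σ → ℕ, ∑ i, d i < m → z d = ∑ i, z (d + Pi.single i 1))
    {q : MvPolynomial σ R} (hq : q.totalDegree < m) :
    rieszFunctional z (q * ∑ i, X i) = rieszFunctional z q := by
  conv_lhs => rw [q.as_sum, Finset.sum_mul]
  conv_rhs => rw [q.as_sum]
  simp only [map_sum, Finset.mul_sum, X, monomial_mul, mul_one, rieszFunctional_monomial]
  refine Finset.sum_congr rfl fun d hd => ?_
  have hdeg : ∑ i, d i < m := by
    rw [← Finsupp.sum_fintype d (fun _ e => e) fun _ => rfl]
    exact (le_totalDegree hd).trans_lt hq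
  simp only [hz d hdeg, Finset.mul_sum, Finsupp.coe_add, Finsupp.single_eq_pi_single]

theorem totalDegree_one_add_sum_X_pow_le [Fintype σ] (m : ℕ) :
    ((1 + ∑ i, X i : MvPolynomial σ R) ^ m).totalDegree ≤ m := by
  have hX (i : σ) : (X i : MvPolynomial σ R).totalDegree ≤ 1 :=
    (totalDegree_monomial_le _ _).trans (by simp)
  have h : (1 + ∑ i, X i : MvPolynomial σ R).totalDegree ≤ 1 := by
    refine (totalDegree_add _ _).trans (max_le (totalDegree_one.trans_le zero_le_one) ?_)
    exact (totalDegree_finsetSum _ _).trans (Finset.sup_le fun i _ => hX i)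
  calc _ ≤ m * (1 + ∑ i, X i : MvPolynomial σ R).totalDegree := totalDegree_pow _ _
    _ ≤ m := by simpa using Nat.mul_le_mul_left m h

theorem rieszFunctional_one_add_sum_X_pow [Fintype σ] [DecidableEq σ] {z : (σ → ℕ) → R}
    (h0 : z 0 = 1) {m : ℕ} (hz : ∀ d : σ → ℕ, ∑ i, d i < m → z d = ∑ i, z (d + Pi.single i 1)) :
    rieszFunctional z ((1 + ∑ i, X i : MvPolynomial σ R) ^ m) = 2 ^ m := by
  induction m with
  | zero => rw [pow_zero, rieszFunctional_one, h0, pow_zero]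
  | succ m ih =>
    have hz' : ∀ d : σ → ℕ, ∑ i, d i < m → z d = ∑ i, z (d + Pi.single i 1) :=
      fun d hd => hz d (hd.trans m.lt_succ_self)
    rw [pow_succ, mul_one_add, map_add,
      rieszFunctional_mul_sum_X hz ((totalDegree_one_add_sum_X_pow_le m).trans_lt m.lt_succ_self),
      ih hz', pow_succ, mul_two]

theorem one_add_sum_X_pow [Fintype σ] [DecidableEq σ] (m : ℕ) :
    (1 + ∑ i, X i : MvPolynomial σ R) ^ m =
      ∑ g ∈ piAntidiag univ m,
        monomial (Finsupp.equivFunOnFinite.symm fun i => g (some i)) (Nat.multinomial univ g : R) := by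
  have h : (1 + ∑ i, X i : MvPolynomial σ R) = ∑ o : Option σ, o.elim 1 X := by
    rw [Fintype.sum_option]; rfl
  rw [h, Finset.sum_pow_eq_sum_piAntidiag]
  refine Finset.sum_congr rfl fun g _ => ?_
  rw [Fintype.prod_option, Option.elim_none, one_pow, one_mul, monomial_eq, C_eq_coe_nat,
    Finsupp.prod_fintype _ _ fun _ => pow_zero _]
  simp

end MvPolynomial

theorem Nat.cast_multinomial_option_elim {K σ : Type*} [Field K] [CharZero K] [Fintype σ]
    {k : ℕ} (a : σ → ℕ) (ha : ∑ i, a i ≤ k) :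
    (Nat.multinomial univ (fun o : Option σ => o.elim (k - ∑ i, a i) a) : K) =
      k.factorial / ((k - ∑ i, a i).factorial * ∏ i, ((a i).factorial : K)) := by
  have h := Nat.multinomial_spec (univ : Finset (Option σ)) fun o => o.elim (k - ∑ i, a i) a
  simp only [Fintype.prod_option, Fintype.sum_option, Option.elim_none, Option.elim_some,
    Nat.sub_add_cancel ha] at h
  rw [eq_div_iff (by simp [prod_ne_zero_iff, Nat.factorial_ne_zero]), ← h]
  push_cast
  ring

theorem Finset.sum_piAntidiag_option_eq_sum_MIdx {M : Type*} [AddCommMonoid M] (n k : ℕ)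
    (f : (Option (Fin n) → ℕ) → M) :
    ∑ g ∈ piAntidiag univ k, f g = ∑ α : MIdx n k, f (fun o => o.elim (k - ∑ i, α.1 i) α.1) := by
  have hsum {g : Option (Fin n) → ℕ} (hg : g ∈ piAntidiag univ k) :
      g none + ∑ i, g (some i) = k := by
    rw [mem_piAntidiag, Fintype.sum_option] at hg
    exact hg.1
  symm
  refine sum_bij' (fun α _ => fun o => o.elim (k - ∑ i, α.1 i) α.1)
    (fun g hg => ⟨fun i => g (some i), (Nat.le_add_left _ _).trans_eq (hsum hg)⟩) (fun α _ => ?_)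
    (fun _ _ => mem_univ _) (fun _ _ => rfl) (fun g hg => ?_) (fun _ _ => rfl)
  · simp only [mem_piAntidiag, Fintype.sum_option, Option.elim_none, Option.elim_some,
      Nat.sub_add_cancel α.2, ne_eq, mem_univ, implies_true, and_self]
  · funext o
    cases o with
    | none => have := hsum hg; simp only [Option.elim_none]; omega
    | some i => rfl

theorem stmt19_general (n k : ℕ) (y : (Fin n → ℕ) → ℝ) (hy0 : y 0 = 1)
    (hloc : ∀ δ : Fin n → ℕ, ∑ i, δ i ≤ 2 * (k - 1) →
      y δ - ∑ i : Fin n, y (fun j => δ j + if j = i then 2 else 0) = 0) :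
    ∑ α : MIdx n k,
        ((k.factorial : ℝ)
            / (((k - ∑ i, α.1 i).factorial : ℝ) * ∏ i, ((α.1 i).factorial : ℝ)))
          * y (fun i => 2 * α.1 i)
      = 2 ^ k := by
  let z : (Fin n → ℕ) → ℝ := fun d => y (fun i => 2 * d i)
  have hz0 : z 0 = 1 := hy0
  have hz (d : Fin n → ℕ) (hd : ∑ i, d i < k) : z d = ∑ i, z (d + Pi.single i 1) := by
    have hdouble (i : Fin n) :
        (fun j => 2 * (d + Pi.single i 1 : Fin n → ℕ) j) = fun j => 2 * d j + if j = i then 2 else 0 := by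
      funext j
      by_cases hji : j = i <;> simp [hji, mul_add]
    simp only [z, hdouble]
    exact sub_eq_zero.mp (hloc (fun j => 2 * d j) (by rw [← mul_sum]; omega))
  have h := MvPolynomial.rieszFunctional_one_add_sum_X_pow (R := ℝ) hz0 hz
  rw [MvPolynomial.one_add_sum_X_pow, map_sum, sum_piAntidiag_option_eq_sum_MIdx] at h
  rw [← h]
  refine sum_congr rfl fun α _ => ?_
  rw [MvPolynomial.rieszFunctional_monomial, Nat.cast_multinomial_option_elim α.1 α.2]
  rfl

/-- If `y₀ = 1` and `y_δ − Σᵢ y_{δ+2eᵢ} = 0` for every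
`δ ∈ ℕ^n_{2(k−1)}` (i.e. the localizing matrix of `1 − ‖x‖₂²` vanishes), then
`Σ_{α∈ℕ^n_k} (k!/((k−|α|)!·α₁!⋯αₙ!)) · y_{2α} = 2^k`. -/
theorem stmt19 (n k : ℕ) (hk : 1 ≤ k) (y : (Fin n → ℕ) → ℝ) (hy0 : y 0 = 1)
    (hloc : ∀ δ : Fin n → ℕ, ∑ i, δ i ≤ 2 * (k - 1) →
      y δ - ∑ i : Fin n, y (fun j => δ j + if j = i then 2 else 0) = 0) :
    ∑ α : MIdx n k,
        ((k.factorial : ℝ)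
            / (((k - ∑ i, α.1 i).factorial : ℝ) * ∏ i, ((α.1 i).factorial : ℝ)))
          * y (fun i => 2 * α.1 i)
      = 2 ^ k :=
  stmt19_general n k y hy0 hloc
end
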